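/- arXiv:2409.06528 — 4 statements merged into one kernel-verified Lean document; each statement's English description precedes it below -/
import Mathlib

section
/- Suppose (u,v) ∈ H¹(ℝ³) × H¹(ℝ³) with u, v ≥ 0, u ≢ 0, u, v ∈ C²(ℝ³), and (u,v) solves −Δu + λ₁u = u³ + βuv and −Δv + λ₂v = ½v² + ½βu² on ℝ³ with β > 0. Then λ₁ > 0 and λ₂ > 0. -/
open MeasureTheory Filter Set
open scoped ENNReal Topology

noncomputable section

abbrev R3 : Type := EuclideanSpace ℝ (Fin 3)

/-- membership in the Sobolev space `H¹(ℝ³)`: differentiable, `L²`, with `L²` gradient. -/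
noncomputable def H1 (u : R3 → ℝ) : Prop :=
  Differentiable ℝ u ∧ MemLp u 2 volume ∧ MemLp (fun x => ‖gradient u x‖) 2 volume

/-- The energy functional of the Schrödinger–KdV system. -/
noncomputable def J (β : ℝ) (u v : R3 → ℝ) : ℝ :=
  (1/2) * (∫ x, (‖gradient u x‖^2 + ‖gradient v x‖^2))
    - (1/4) * (∫ x, (u x)^4) - (1/6) * (∫ x, (v x)^3)
    - (β/2) * (∫ x, (u x)^2 * v x)

/-- The Laplacian on `ℝ³`, as the sum of pure second partial derivatives. -/
noncomputable def lap (u : R3 → ℝ) (x : R3) : ℝ :=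
  ∑ i : Fin 3, iteratedFDeriv ℝ 2 u x ![EuclideanSpace.single i 1, EuclideanSpace.single i 1]

/-! If `λ₁ ≤ 0`, the first equation makes `u` superharmonic, and if `λ₂ ≤ 0` the second one makes
`v` superharmonic (since `β u² ≥ 0`). In dimension `n ≤ 3` a `C²` superharmonic function `w ∈ L²` is
harmonic: test `Δw` against the cutoffs `φ_R = η(·/R)`. If `Δw < 0` somewhere, `∫ Δw φ_R` stays
below a fixed negative number, whereas integrating by parts and Cauchy–Schwarz give
`(∫ Δw φ_R)² ≤ ‖w‖₂² ‖Δφ_R‖₂² = ‖w‖₂² ‖Δη‖₂² R^(n-4) → 0`. So `Δu = 0` (resp. `Δv = 0`), and the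
equation then forces `u³ ≤ 0` (resp. `β u² ≤ 0`), contradicting `u ≢ 0`. -/

open InnerProductSpace Laplacian Module

section Measure

variable {α : Type*} [MeasurableSpace α] {μ : Measure α}

theorem sq_integral_mul_le_integral_sq_mul_integral_sq {f g : α → ℝ} (hf : MemLp f 2 μ)
    (hg : MemLp g 2 μ) :
    (∫ a, f a * g a ∂μ) ^ 2 ≤ (∫ a, f a ^ 2 ∂μ) * ∫ a, g a ^ 2 ∂μ := by
  have hsq : ∀ h : α → ℝ, ∫ a, ‖h a‖ ^ (2 : ℝ) ∂μ = ∫ a, h a ^ 2 ∂μ := fun h => by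
    simp [sq_abs]
  have holder := integral_mul_norm_le_Lp_mul_Lq Real.HolderConjugate.two_two
    (by simpa using hf) (by simpa using hg)
  rw [hsq, hsq] at holder
  have habs : |∫ a, f a * g a ∂μ| ≤ ∫ a, ‖f a‖ * ‖g a‖ ∂μ := by
    simpa only [Real.norm_eq_abs, abs_mul] using
      abs_integral_le_integral_abs (f := fun a => f a * g a)
  calc (∫ a, f a * g a ∂μ) ^ 2 = |∫ a, f a * g a ∂μ| ^ 2 := (sq_abs _).symm
    _ ≤ ((∫ a, f a ^ 2 ∂μ) ^ (1 / 2 : ℝ) * (∫ a, g a ^ 2 ∂μ) ^ (1 / 2 : ℝ)) ^ 2 := by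
      gcongr; exact habs.trans holder
    _ = (∫ a, f a ^ 2 ∂μ) * ∫ a, g a ^ 2 ∂μ := by
      rw [mul_pow, ← Real.rpow_natCast, ← Real.rpow_natCast (_ ^ _), ← Real.rpow_mul,
        ← Real.rpow_mul]
      · norm_num
      all_goals exact integral_nonneg fun _ => sq_nonneg _

theorem integral_mul_le_neg_measureReal {g φ : α → ℝ} {K : Set α} (hK : MeasurableSet K)
    (hKμ : μ K ≠ ∞) {ε : ℝ} (hg : ∀ x, g x ≤ 0) (hgK : ∀ x ∈ K, g x ≤ -ε) (hφ : ∀ x, 0 ≤ φ x)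
    (hφK : ∀ x ∈ K, φ x = 1) (hint : Integrable (fun x => g x * φ x) μ) :
    ∫ x, g x * φ x ∂μ ≤ -(ε * μ.real K) := by
  have hle : ∀ x, g x * φ x ≤ K.indicator (fun _ => -ε) x := fun x => by
    by_cases hx : x ∈ K
    · simpa [hx, hφK x hx] using hgK x hx
    · simpa [hx] using mul_nonpos_of_nonpos_of_nonneg (hg x) (hφ x)
  calc ∫ x, g x * φ x ∂μ ≤ ∫ x, K.indicator (fun _ => -ε) x ∂μ :=
        integral_mono hint ((integrableOn_const hKμ).integrable_indicator hK) hle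
    _ = -(ε * μ.real K) := by rw [integral_indicator_const _ hK, smul_eq_mul]; ring

end Measure

theorem ContDiff.fderiv_apply_const {E : Type*} [NormedAddCommGroup E] [NormedSpace ℝ E]
    {m n : WithTop ℕ∞} {f : E → ℝ} (hf : ContDiff ℝ n f) (hmn : m + 1 ≤ n) (v : E) :
    ContDiff ℝ m fun x => fderiv ℝ f x v :=
  (hf.fderiv_right hmn).clm_apply contDiff_const

theorem ContDiff.continuous_fderiv_fderiv_apply {E : Type*} [NormedAddCommGroup E]
    [NormedSpace ℝ E] {f : E → ℝ} (hf : ContDiff ℝ 2 f) (v : E) :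
    Continuous fun x => fderiv ℝ (fun y => fderiv ℝ f y v) x v :=
  ((hf.fderiv_apply_const (m := 1) (by norm_num) v).fderiv_apply_const
    (m := 0) (by norm_num) v).continuous

theorem ContDiffBump.apply_inv_smul_eq_one {E : Type*} [NormedAddCommGroup E] [NormedSpace ℝ E]
    [HasContDiffBump E] (η : ContDiffBump (0 : E)) {R : ℝ} (hR : 0 < R) {y : E}
    (hy : ‖y‖ ≤ R * η.rIn) : η (R⁻¹ • y) = 1 := by
  apply η.one_of_mem_closedBall
  rw [mem_closedBall_zero_iff, norm_smul, norm_inv, Real.norm_of_nonneg hR.le, inv_mul_le_iff₀ hR]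
  exact hy

section Laplacian

variable {E : Type*} [NormedAddCommGroup E] [InnerProductSpace ℝ E] [FiniteDimensional ℝ E]

theorem laplacian_eq_sum_fderiv_fderiv {ι : Type*} [Fintype ι] (b : OrthonormalBasis ι ℝ E)
    {f : E → ℝ} (hf : ContDiff ℝ 2 f) (x : E) :
    Δ f x = ∑ i, fderiv ℝ (fun y => fderiv ℝ f y (b i)) x (b i) := by
  have hf' : DifferentiableAt ℝ (fderiv ℝ f) x :=
    (hf.fderiv_right (m := 1) (by norm_num)).differentiable one_ne_zero x
  simp [laplacian_eq_iteratedFDeriv_orthonormalBasis f b, iteratedFDeriv_two_apply,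
    fderiv_clm_apply hf' (differentiableAt_const _)]

theorem ContDiff.continuous_laplacian {f : E → ℝ} (hf : ContDiff ℝ 2 f) : Continuous (Δ f) := by
  rw [funext (laplacian_eq_sum_fderiv_fderiv (stdOrthonormalBasis ℝ E) hf)]
  exact continuous_finsetSum _ fun i _ => hf.continuous_fderiv_fderiv_apply _

theorem HasCompactSupport.laplacian {f : E → ℝ} (hf : HasCompactSupport f) :
    HasCompactSupport (Δ f) := by
  refine (hf.iteratedFDeriv (𝕜 := ℝ) 2).mono fun x hx h0 => hx ?_
  simp [laplacian_eq_iteratedFDeriv_orthonormalBasis f (stdOrthonormalBasis ℝ E), h0]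

theorem laplacian_comp_smul {f : E → ℝ} (hf : ContDiff ℝ 2 f) (c : ℝ) (x : E) :
    Δ (fun y => f (c • y)) x = c ^ 2 * Δ f (c • x) := by
  have h := (c • ContinuousLinearMap.id ℝ E).iteratedFDeriv_comp_right hf x le_rfl
  simp only [laplacian_eq_iteratedFDeriv_stdOrthonormalBasis, Finset.mul_sum]
  refine Finset.sum_congr rfl fun i _ => ?_
  rw [show (fun y => f (c • y)) = f ∘ (c • ContinuousLinearMap.id ℝ E) from rfl, h]
  simp [ContinuousMultilinearMap.map_smul_univ, sq]

variable [MeasurableSpace E] [BorelSpace E] {μ : Measure E} [μ.IsAddHaarMeasure]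

theorem integral_mul_fderiv_eq_neg_fderiv_mul_of_hasCompactSupport {f g : E → ℝ}
    (hf : ContDiff ℝ 1 f) (hg : ContDiff ℝ 1 g) (hgs : HasCompactSupport g) (v : E) :
    ∫ x, f x * fderiv ℝ g x v ∂μ = -∫ x, fderiv ℝ f x v * g x ∂μ := by
  have hDf := (hf.fderiv_apply_const (m := 0) (by norm_num) v).continuous
  have hDg := (hg.fderiv_apply_const (m := 0) (by norm_num) v).continuous
  exact integral_mul_fderiv_eq_neg_fderiv_mul_of_integrable
    ((hDf.mul hg.continuous).integrable_of_hasCompactSupport hgs.mul_left)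
    ((hf.continuous.mul hDg).integrable_of_hasCompactSupport (hgs.fderiv_apply ℝ v).mul_left)
    ((hf.continuous.mul hg.continuous).integrable_of_hasCompactSupport hgs.mul_left)
    (fun x _ => (hf.differentiable one_ne_zero).differentiableAt)
    (fun x _ => (hg.differentiable one_ne_zero).differentiableAt)

theorem integral_mul_fderiv_fderiv_eq_of_hasCompactSupport {w φ : E → ℝ} (hw : ContDiff ℝ 2 w)
    (hφ : ContDiff ℝ 2 φ) (hφs : HasCompactSupport φ) (v : E) :
    ∫ x, w x * fderiv ℝ (fun y => fderiv ℝ φ y v) x v ∂μ =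
      ∫ x, fderiv ℝ (fun y => fderiv ℝ w y v) x v * φ x ∂μ := by
  rw [integral_mul_fderiv_eq_neg_fderiv_mul_of_hasCompactSupport (hw.of_le one_le_two)
      (hφ.fderiv_apply_const (by norm_num) v) (hφs.fderiv_apply ℝ v),
    integral_mul_fderiv_eq_neg_fderiv_mul_of_hasCompactSupport
      (hw.fderiv_apply_const (by norm_num) v) (hφ.of_le one_le_two) hφs, neg_neg]

theorem integral_mul_laplacian_eq_of_hasCompactSupport {w φ : E → ℝ} (hw : ContDiff ℝ 2 w)
    (hφ : ContDiff ℝ 2 φ) (hφs : HasCompactSupport φ) :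
    ∫ x, w x * Δ φ x ∂μ = ∫ x, Δ w x * φ x ∂μ := by
  set b := stdOrthonormalBasis ℝ E
  simp only [laplacian_eq_sum_fderiv_fderiv b hw, laplacian_eq_sum_fderiv_fderiv b hφ,
    Finset.mul_sum, Finset.sum_mul]
  rw [integral_finsetSum, integral_finsetSum]
  · exact Finset.sum_congr rfl fun i _ =>
      integral_mul_fderiv_fderiv_eq_of_hasCompactSupport hw hφ hφs _
  · exact fun i _ => ((hw.continuous_fderiv_fderiv_apply _).mul hφ.continuous
      ).integrable_of_hasCompactSupport hφs.mul_left
  · exact fun i _ => (hw.continuous.mul (hφ.continuous_fderiv_fderiv_apply _)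
      ).integrable_of_hasCompactSupport ((hφs.fderiv_apply ℝ _).fderiv_apply ℝ _).mul_left

theorem integral_sq_laplacian_comp_smul {f : E → ℝ} (hf : ContDiff ℝ 2 f) {R : ℝ} (hR : 0 < R) :
    ∫ x, Δ (fun y => f (R⁻¹ • y)) x ^ 2 ∂μ = R ^ finrank ℝ E / R ^ 4 * ∫ x, Δ f x ^ 2 ∂μ := by
  simp only [laplacian_comp_smul hf, mul_pow]
  rw [integral_const_mul, Measure.integral_comp_smul μ (fun y => Δ f y ^ 2), smul_eq_mul,
    abs_of_pos (by positivity), ← inv_pow, inv_inv]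
  field_simp

theorem tendsto_integral_laplacian_mul_comp_inv_smul (hE : finrank ℝ E < 4) {w η : E → ℝ}
    (hw : ContDiff ℝ 2 w) (hw2 : MemLp w 2 μ) (hη : ContDiff ℝ 2 η) (hηs : HasCompactSupport η) :
    Tendsto (fun R : ℝ => ∫ x, Δ w x * η (R⁻¹ • x) ∂μ) atTop (𝓝 0) := by
  have hφC : ∀ R : ℝ, ContDiff ℝ 2 fun y => η (R⁻¹ • y) := fun R =>
    hη.comp (contDiff_const_smul R⁻¹)
  have hbound : ∀ᶠ R : ℝ in atTop, (∫ x, Δ w x * η (R⁻¹ • x) ∂μ) ^ 2 ≤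
      (∫ x, w x ^ 2 ∂μ) * (R ^ finrank ℝ E / R ^ 4 * ∫ x, Δ η x ^ 2 ∂μ) := by
    filter_upwards [eventually_gt_atTop 0] with R hR
    have hφs := hηs.comp_smul (inv_ne_zero hR.ne')
    rw [← integral_mul_laplacian_eq_of_hasCompactSupport hw (hφC R) hφs,
      ← integral_sq_laplacian_comp_smul hη hR]
    exact sq_integral_mul_le_integral_sq_mul_integral_sq hw2 <|
      (hφC R).continuous_laplacian.memLp_of_hasCompactSupport hφs.laplacian
  have hsq : Tendsto (fun R : ℝ => (∫ x, Δ w x * η (R⁻¹ • x) ∂μ) ^ 2) atTop (𝓝 0) := by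
    refine squeeze_zero' (Eventually.of_forall fun _ => sq_nonneg _) hbound ?_
    simpa using ((tendsto_pow_div_pow_atTop_zero hE).mul_const _).const_mul (∫ x, w x ^ 2 ∂μ)
  exact (tendsto_zero_iff_abs_tendsto_zero _).2 <| by
    simpa [Function.comp_def, Real.sqrt_sq_eq_abs] using hsq.sqrt

theorem laplacian_eq_zero_of_nonpos_of_memLp_two (hE : finrank ℝ E < 4) {w : E → ℝ}
    (hw : ContDiff ℝ 2 w) (hw2 : MemLp w 2 μ) (hneg : ∀ x, Δ w x ≤ 0) (x₀ : E) :
    Δ w x₀ = 0 := by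
  by_contra hne
  have hx₀ : Δ w x₀ < 0 := (hneg x₀).lt_of_ne hne
  set ε := -Δ w x₀ / 2 with hε_def
  have hε : 0 < ε := by linarith
  obtain ⟨δ, hδ, hball⟩ := Metric.eventually_nhds_iff_ball.1 <|
    hw.continuous_laplacian.continuousAt.eventually (gt_mem_nhds (by linarith : Δ w x₀ < -ε))
  set K := Metric.ball x₀ δ
  have hK : 0 < μ.real K :=
    ENNReal.toReal_pos (Metric.measure_ball_pos μ x₀ hδ).ne' measure_ball_lt_top.ne
  let η : ContDiffBump (0 : E) := ⟨1, 2, one_pos, one_lt_two⟩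
  have hupper : ∀ᶠ R : ℝ in atTop, ∫ x, Δ w x * η (R⁻¹ • x) ∂μ ≤ -(ε * μ.real K) := by
    filter_upwards [eventually_ge_atTop (‖x₀‖ + δ), eventually_gt_atTop 0] with R hRK hR
    refine integral_mul_le_neg_measureReal Metric.isOpen_ball.measurableSet
      measure_ball_lt_top.ne hneg (fun x hx => (hball x hx).le) (fun _ => η.nonneg)
      (fun y hy => η.apply_inv_smul_eq_one hR ?_) ?_
    · have := norm_le_insert' y x₀
      have := mem_ball_iff_norm.1 hy
      simp only [η, mul_one]
      linarith
    · exact (hw.continuous_laplacian.mul (η.continuous.comp (continuous_const_smul R⁻¹))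
        ).integrable_of_hasCompactSupport
          (η.hasCompactSupport.comp_smul (inv_ne_zero hR.ne')).mul_left
  have := le_of_tendsto (tendsto_integral_laplacian_mul_comp_inv_smul hE hw hw2 η.contDiff
    η.hasCompactSupport) hupper
  linarith [mul_pos hε hK]

end Laplacian

theorem lap_eq_laplacian (u : R3 → ℝ) : lap u = Δ u := by
  ext x
  simp [lap, laplacian_eq_iteratedFDeriv_orthonormalBasis u (EuclideanSpace.basisFun (Fin 3) ℝ)]

theorem lap_eq_zero_of_nonpos {w : R3 → ℝ} (hw : ContDiff ℝ 2 w) (hw2 : MemLp w 2 volume)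
    (hneg : ∀ x, lap w x ≤ 0) (x : R3) : lap w x = 0 := by
  rw [lap_eq_laplacian] at hneg ⊢
  exact laplacian_eq_zero_of_nonpos_of_memLp_two (by simp) hw hw2 hneg x

/-- **Positivity of the Lagrange multipliers.** If `(u,v) ∈ H¹(ℝ³)²` is a nonnegative `C²`
solution of the Schrödinger–KdV system with `u ≢ 0` and `β > 0`, then `λ₁ > 0` and `λ₂ > 0`. -/
theorem multipliers_pos (β lam1 lam2 : ℝ) (hβ : 0 < β) (u v : R3 → ℝ)
    (huC : ContDiff ℝ 2 u) (hvC : ContDiff ℝ 2 v)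
    (huH : H1 u) (hvH : H1 v)
    (hupos : ∀ x, 0 ≤ u x) (hvpos : ∀ x, 0 ≤ v x) (hune : u ≠ 0)
    (heq1 : ∀ x, -lap u x + lam1 * u x = (u x)^3 + β * u x * v x)
    (heq2 : ∀ x, -lap v x + lam2 * v x = (1/2) * (v x)^2 + (1/2) * β * (u x)^2) :
    0 < lam1 ∧ 0 < lam2 := by
  obtain ⟨x₀, hx₀⟩ := Function.ne_iff.1 hune
  have hux₀ : 0 < u x₀ := (hupos x₀).lt_of_ne' hx₀
  have huv : ∀ x, 0 ≤ β * u x * v x := fun x => by have := hupos x; have := hvpos x; positivity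
  constructor
  · by_contra! h
    have hlap := lap_eq_zero_of_nonpos huC huH.2.1 fun x => by
      nlinarith [heq1 x, huv x, pow_nonneg (hupos x) 3, mul_nonpos_of_nonpos_of_nonneg h (hupos x)]
    nlinarith [heq1 x₀, hlap x₀, huv x₀, pow_pos hux₀ 3, mul_nonpos_of_nonpos_of_nonneg h hux₀.le]
  · by_contra! h
    have hlap := lap_eq_zero_of_nonpos hvC hvH.2.1 fun x => by
      nlinarith [heq2 x, sq_nonneg (v x), sq_nonneg (u x),
        mul_nonpos_of_nonpos_of_nonneg h (hvpos x)]
    nlinarith [heq2 x₀, hlap x₀, sq_nonneg (v x₀), pow_pos hux₀ 2,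
      mul_nonpos_of_nonpos_of_nonneg h (hvpos x₀)]
end
end

section
/- Fix a ≥ 0, b > 0, β > 0. For every (u,v) ∈ H¹(ℝ³)×H¹(ℝ³) with ‖u‖²₂ = a, ‖v‖²₂ = b and P(u,v) = 0, the reduced energy E(u,v) := J(u,v) = (1/6)∫(|∇u|²+|∇v|²) − (1/12)∫v³ − (β/4)∫u²v satisfies E(u,v) ≥ (1/6)(‖∇u‖²₂+‖∇v‖²₂) − (1/12)C₃³b^{3/4}‖∇v‖₂^{3/2} − (β/4)C₄²a^{1/4}b^{1/2}‖∇u‖₂^{3/2}. In particular, J is coercive and bounded below on the set {(u,v) ∈ S(a,b): P(u,v) = 0}. -/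
open MeasureTheory Filter Set
open scoped ENNReal Topology

noncomputable section

/-- `C₃` is a Gagliardo–Nirenberg constant: `‖v‖_{L³} ≤ C₃ ‖∇v‖₂^{1/2} ‖v‖₂^{1/2}`. -/
noncomputable def GN3 (C3 : ℝ) : Prop :=
  ∀ w : R3 → ℝ, H1 w →
    (∫ x, |w x| ^ 3) ^ ((1:ℝ)/3) ≤
      C3 * (∫ x, ‖gradient w x‖ ^ 2) ^ ((1:ℝ)/4) * (∫ x, (w x) ^ 2) ^ ((1:ℝ)/4)

/-- `C₄` is a Gagliardo–Nirenberg constant: `‖u‖_{L⁴} ≤ C₄ ‖∇u‖₂^{3/4} ‖u‖₂^{1/4}`. -/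
noncomputable def GN4 (C4 : ℝ) : Prop :=
  ∀ w : R3 → ℝ, H1 w →
    (∫ x, |w x| ^ 4) ^ ((1:ℝ)/4) ≤
      C4 * (∫ x, ‖gradient w x‖ ^ 2) ^ ((3:ℝ)/8) * (∫ x, (w x) ^ 2) ^ ((1:ℝ)/8)

/-- The Nehari–Pohozaev functional
`P(u,v) = ∫(|∇u|²+|∇v|²) - ¾∫u⁴ - ¼∫v³ - ¾β∫u²v`. -/
noncomputable def P (β : ℝ) (u v : R3 → ℝ) : ℝ :=
  (∫ x, (‖gradient u x‖^2 + ‖gradient v x‖^2))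
    - (3/4) * (∫ x, (u x)^4) - (1/4) * (∫ x, (v x)^3)
    - (3 * β / 4) * (∫ x, (u x)^2 * v x)

/-!
On the Pohozaev set, `J = J - P/3` removes the quartic term `∫ u⁴`. The remaining terms are
controlled by the Gagliardo–Nirenberg inequalities: `∫ v³ ≤ ‖v‖₃³` directly, and
`∫ u²v ≤ ‖u‖₄² ‖v‖₂` by Cauchy–Schwarz. Both are of order `‖∇·‖₂^{3/2}`, sublinear in the
kinetic energy, which gives coercivity. To apply Cauchy–Schwarz one needs `u⁴` integrable;
this follows from `GN4` applied to the bounded truncations `c · arctan (u / c)` and Fatou.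
-/

theorem integrable_of_tendsto_of_integral_norm_le {α : Type*} [MeasurableSpace α]
    {μ : Measure α} {G : ℕ → α → ℝ} {f : α → ℝ} {K : ℝ} (hG : ∀ n, Integrable (G n) μ)
    (hGf : ∀ᵐ x ∂μ, Tendsto (fun n => G n x) atTop (𝓝 (f x)))
    (hK : ∀ n, ∫ x, ‖G n x‖ ∂μ ≤ K) : Integrable f μ := by
  refine ⟨aestronglyMeasurable_of_tendsto_ae _ (fun n => (hG n).1) hGf, ?_⟩
  have hfatou : ∫⁻ x, ‖f x‖ₑ ∂μ ≤ liminf (fun n => ∫⁻ x, ‖G n x‖ₑ ∂μ) atTop :=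
    lintegral_congr_ae (by filter_upwards [hGf] with x hx using hx.enorm.liminf_eq) ▸
      lintegral_liminf_le' fun n => (hG n).1.aemeasurable.enorm
  have hbound : liminf (fun n => ∫⁻ x, ‖G n x‖ₑ ∂μ) atTop ≤ ENNReal.ofReal K := by
    refine liminf_le_of_frequently_le' (Frequently.of_forall fun n => ?_)
    rw [← ofReal_integral_norm_eq_lintegral_enorm (hG n)]
    exact ENNReal.ofReal_le_ofReal (hK n)
  exact (hfatou.trans hbound).trans_lt ENNReal.ofReal_lt_top

theorem integrable_abs_pow_four_of_abs_le {α : Type*} [MeasurableSpace α] {μ : Measure α}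
    {w : α → ℝ} {M : ℝ} (hw : MemLp w 2 μ) (hM : ∀ x, |w x| ≤ M) :
    Integrable (fun x => |w x| ^ 4) μ := by
  refine (hw.integrable_sq.const_mul (M ^ 2)).mono'
    ((continuous_abs.comp_aestronglyMeasurable hw.1).pow 4) (ae_of_all _ fun x => ?_)
  have hsq : w x ^ 2 ≤ M ^ 2 := sq_le_sq' (abs_le.1 (hM x)).1 (abs_le.1 (hM x)).2
  have h4 : |w x| ^ 4 = (w x ^ 2) ^ 2 := by rw [← sq_abs (w x)]; ring
  rw [Real.norm_eq_abs, abs_pow, abs_abs, h4]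
  nlinarith [sq_nonneg (w x)]

theorem integral_sq_mul_le_L4_sq_mul_L2 {α : Type*} [MeasurableSpace α] {μ : Measure α}
    {u v : α → ℝ} (hu : AEStronglyMeasurable u μ) (hu4 : Integrable (fun x => u x ^ 4) μ)
    (hv : MemLp v 2 μ) :
    ∫ x, u x ^ 2 * v x ∂μ ≤ (∫ x, u x ^ 4 ∂μ) ^ ((1:ℝ)/2) * (∫ x, v x ^ 2 ∂μ) ^ ((1:ℝ)/2) := by
  have hu2 : MemLp (fun x => u x ^ 2) (ENNReal.ofReal 2) μ := by
    rw [ENNReal.ofReal_ofNat, memLp_two_iff_integrable_sq (by fun_prop)]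
    simpa only [← pow_mul] using hu4
  have hholder := integral_mul_norm_le_Lp_mul_Lq Real.HolderConjugate.two_two hu2
    (by rwa [ENNReal.ofReal_ofNat])
  simp only [Real.norm_eq_abs, Real.rpow_two, sq_abs, ← pow_mul, abs_pow] at hholder
  calc ∫ x, u x ^ 2 * v x ∂μ ≤ ‖∫ x, u x ^ 2 * v x ∂μ‖ := Real.le_norm_self _
    _ ≤ ∫ x, ‖u x ^ 2 * v x‖ ∂μ := norm_integral_le_integral_norm _
    _ = ∫ x, u x ^ 2 * |v x| ∂μ := by simp only [norm_mul, norm_pow, Real.norm_eq_abs, sq_abs]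
    _ ≤ _ := hholder

theorem exists_mul_rpow_le_mul_add {p : ℝ} (hp0 : 0 ≤ p) (hp1 : p < 1) (c : ℝ) {ε : ℝ}
    (hε : 0 < ε) : ∃ K, ∀ t, 0 ≤ t → c * t ^ p ≤ ε * t + K := by
  -- `T` is where `|c| t ^ p = ε t`: below `T` the left side is bounded, above it `ε t` wins.
  set T := (|c| / ε) ^ (1 - p)⁻¹
  have hT : 0 ≤ T := by positivity
  refine ⟨|c| * T ^ p, fun t ht => ?_⟩
  have hct : c * t ^ p ≤ |c| * t ^ p :=
    mul_le_mul_of_nonneg_right (le_abs_self c) (Real.rpow_nonneg ht p)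
  rcases le_total t T with htT | hTt
  · have := mul_le_mul_of_nonneg_left (Real.rpow_le_rpow ht htT hp0) (abs_nonneg c)
    nlinarith
  · have hc : |c| ≤ ε * t ^ (1 - p) := by
      have := Real.rpow_le_rpow hT hTt (by linarith : 0 ≤ 1 - p)
      rw [Real.rpow_inv_rpow (by positivity) (by linarith)] at this
      rwa [div_le_iff₀' hε] at this
    have hsplit : t ^ (1 - p) * t ^ p = t := by
      rw [← Real.rpow_add' ht (by norm_num), sub_add_cancel, Real.rpow_one]
    have := mul_le_mul_of_nonneg_right hc (Real.rpow_nonneg ht p)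
    have : 0 ≤ |c| * T ^ p := by positivity
    nlinarith

theorem le_pow_of_rpow_one_div_le {X Y : ℝ} {n : ℕ} (hn : n ≠ 0) (hX : 0 ≤ X)
    (h : X ^ ((1:ℝ) / n) ≤ Y) : X ≤ Y ^ n := by
  rw [one_div] at h
  calc X = (X ^ (n⁻¹ : ℝ)) ^ n := (Real.rpow_inv_natCast_pow hX hn).symm
    _ ≤ Y ^ n := pow_le_pow_left₀ (Real.rpow_nonneg hX _) h n

theorem norm_gradient_eq_norm_fderiv {E : Type*} [NormedAddCommGroup E] [InnerProductSpace ℝ E]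
    [CompleteSpace E] (f : E → ℝ) (x : E) : ‖gradient f x‖ = ‖fderiv ℝ f x‖ :=
  (InnerProductSpace.toDual ℝ E).symm.norm_map _

section OneLipschitzComp

variable {φ : ℝ → ℝ} (hφ : Differentiable ℝ φ) (hφ' : ∀ t, |deriv φ t| ≤ 1)
include hφ hφ'

theorem abs_le_abs_of_abs_deriv_le_one (hφ0 : φ 0 = 0) (t : ℝ) : |φ t| ≤ |t| := by
  have hlip : LipschitzWith 1 φ := lipschitzWith_of_nnnorm_deriv_le hφ fun t => by
    rw [← NNReal.coe_le_coe, coe_nnnorm]; exact hφ' t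
  simpa [hφ0] using hlip.dist_le_mul t 0

theorem norm_gradient_comp_le {E : Type*} [NormedAddCommGroup E] [InnerProductSpace ℝ E]
    [CompleteSpace E] {u : E → ℝ} (hu : Differentiable ℝ u) (x : E) :
    ‖gradient (fun y => φ (u y)) x‖ ≤ ‖gradient u x‖ := by
  rw [norm_gradient_eq_norm_fderiv, norm_gradient_eq_norm_fderiv,
    show (fun y => φ (u y)) = φ ∘ u from rfl,
    ((hφ (u x)).hasDerivAt.comp_hasFDerivAt x (hu x).hasFDerivAt).fderiv, norm_smul]
  exact mul_le_of_le_one_left (norm_nonneg _) (hφ' (u x))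

theorem H1.comp (hφ0 : φ 0 = 0) {u : R3 → ℝ} (hu : H1 u) : H1 (fun x => φ (u x)) := by
  have hdiff : Differentiable ℝ (fun x => φ (u x)) := hφ.comp hu.1
  refine ⟨hdiff, hu.2.1.of_le hdiff.continuous.aestronglyMeasurable ?_, hu.2.2.of_le ?_ ?_⟩
  · exact ae_of_all _ fun x => abs_le_abs_of_abs_deriv_le_one hφ hφ' hφ0 (u x)
  · exact ((InnerProductSpace.toDual ℝ R3).symm.continuous.measurable.comp
      (measurable_fderiv ℝ _)).norm.aestronglyMeasurable
  · exact ae_of_all _ fun x => by simpa using norm_gradient_comp_le hφ hφ' hu.1 x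

theorem integral_sq_comp_le {α : Type*} [MeasurableSpace α] {μ : Measure α} (hφ0 : φ 0 = 0)
    {u : α → ℝ} (hu : MemLp u 2 μ) : ∫ x, φ (u x) ^ 2 ∂μ ≤ ∫ x, u x ^ 2 ∂μ :=
  integral_mono_of_nonneg (ae_of_all _ fun _ => sq_nonneg _) hu.integrable_sq
    (ae_of_all _ fun x => sq_le_sq.2 (abs_le_abs_of_abs_deriv_le_one hφ hφ' hφ0 (u x)))

theorem integral_norm_gradient_comp_sq_le {u : R3 → ℝ} (hu : H1 u) :
    ∫ x, ‖gradient (fun y => φ (u y)) x‖ ^ 2 ≤ ∫ x, ‖gradient u x‖ ^ 2 :=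
  integral_mono_of_nonneg (ae_of_all _ fun _ => sq_nonneg _) hu.2.2.integrable_sq
    (ae_of_all _ fun x =>
      pow_le_pow_left₀ (norm_nonneg _) (norm_gradient_comp_le hφ hφ' hu.1 x) 2)

end OneLipschitzComp

noncomputable def arctanTrunc (c t : ℝ) : ℝ := c * Real.arctan (t / c)

theorem hasDerivAt_arctanTrunc {c : ℝ} (hc : c ≠ 0) (t : ℝ) :
    HasDerivAt (arctanTrunc c) (1 + (t / c) ^ 2)⁻¹ t := by
  have := ((Real.hasDerivAt_arctan' (t / c)).comp t ((hasDerivAt_id t).div_const c)).const_mul c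
  exact (this : HasDerivAt (arctanTrunc c) _ t).congr_deriv (by field_simp)

theorem differentiable_arctanTrunc {c : ℝ} (hc : c ≠ 0) : Differentiable ℝ (arctanTrunc c) :=
  fun t => (hasDerivAt_arctanTrunc hc t).differentiableAt

theorem abs_deriv_arctanTrunc_le_one {c : ℝ} (hc : c ≠ 0) (t : ℝ) :
    |deriv (arctanTrunc c) t| ≤ 1 := by
  rw [(hasDerivAt_arctanTrunc hc t).deriv, abs_of_pos (by positivity)]
  exact inv_le_one_of_one_le₀ (le_add_of_nonneg_right (sq_nonneg _))

theorem abs_arctanTrunc_le {c : ℝ} (hc : 0 < c) (t : ℝ) :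
    |arctanTrunc c t| ≤ c * (Real.pi / 2) := by
  rw [arctanTrunc, abs_mul, abs_of_pos hc]
  exact mul_le_mul_of_nonneg_left (abs_le.2 ⟨(Real.neg_pi_div_two_lt_arctan _).le,
    (Real.arctan_lt_pi_div_two _).le⟩) hc.le

theorem tendsto_arctanTrunc (t : ℝ) : Tendsto (fun c => arctanTrunc c t) atTop (𝓝 t) := by
  rcases eq_or_ne t 0 with rfl | ht
  · simp [arctanTrunc]
  -- `c · arctan (t / c) = t · (arctan s / s)` with `s = t / c → 0`: a slope of `arctan` at `0`.
  have hslope := hasDerivAt_iff_tendsto_slope_zero.1 (Real.hasDerivAt_arctan' 0)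
  have hs : Tendsto (fun c : ℝ => t / c) atTop (𝓝[≠] 0) :=
    tendsto_nhdsWithin_iff.2 ⟨tendsto_const_nhds.div_atTop tendsto_id,
      (eventually_gt_atTop 0).mono fun c hc => div_ne_zero ht hc.ne'⟩
  have := (hslope.comp hs).const_mul t
  simp only [Real.arctan_zero, zero_add, sub_zero, add_zero, zero_pow two_ne_zero, inv_one,
    mul_one, smul_eq_mul, Function.comp_def] at this
  refine this.congr' ((eventually_gt_atTop 0).mono fun c hc => ?_)
  simp only [arctanTrunc]
  field_simp

theorem GN3.integral_pow_three_le {C3 : ℝ} (hGN3 : GN3 C3) {v : R3 → ℝ} (hv : H1 v) :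
    ∫ x, v x ^ 3 ≤
      C3 ^ 3 * (∫ x, v x ^ 2) ^ ((3:ℝ)/4) * (∫ x, ‖gradient v x‖ ^ 2) ^ ((3:ℝ)/4) := by
  have hT : 0 ≤ ∫ x, ‖gradient v x‖ ^ 2 := integral_nonneg fun _ => sq_nonneg _
  have hB : 0 ≤ ∫ x, v x ^ 2 := integral_nonneg fun _ => sq_nonneg _
  calc ∫ x, v x ^ 3 ≤ ‖∫ x, v x ^ 3‖ := Real.le_norm_self _
    _ ≤ ∫ x, |v x| ^ 3 := (norm_integral_le_integral_norm _).trans_eq (by simp only [norm_pow,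
        Real.norm_eq_abs])
    _ ≤ (C3 * (∫ x, ‖gradient v x‖ ^ 2) ^ ((1:ℝ)/4) * (∫ x, v x ^ 2) ^ ((1:ℝ)/4)) ^ 3 :=
        le_pow_of_rpow_one_div_le (n := 3) three_ne_zero (integral_nonneg fun _ => by positivity)
          (by exact_mod_cast hGN3 v hv)
    _ = _ := by
        rw [mul_pow, mul_pow, ← Real.rpow_mul_natCast hT, ← Real.rpow_mul_natCast hB]
        norm_num
        ring

theorem GN4.integral_abs_pow_four_le {C4 : ℝ} (hGN4 : GN4 C4) {w : R3 → ℝ} (hw : H1 w) :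
    ∫ x, |w x| ^ 4 ≤
      C4 ^ 4 * (∫ x, ‖gradient w x‖ ^ 2) ^ ((3:ℝ)/2) * (∫ x, w x ^ 2) ^ ((1:ℝ)/2) := by
  have hT : 0 ≤ ∫ x, ‖gradient w x‖ ^ 2 := integral_nonneg fun _ => sq_nonneg _
  have hA : 0 ≤ ∫ x, w x ^ 2 := integral_nonneg fun _ => sq_nonneg _
  calc ∫ x, |w x| ^ 4
      ≤ (C4 * (∫ x, ‖gradient w x‖ ^ 2) ^ ((3:ℝ)/8) * (∫ x, w x ^ 2) ^ ((1:ℝ)/8)) ^ 4 :=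
        le_pow_of_rpow_one_div_le (n := 4) four_ne_zero (integral_nonneg fun _ => by positivity)
          (by exact_mod_cast hGN4 w hw)
    _ = _ := by
        rw [mul_pow, mul_pow, ← Real.rpow_mul_natCast hT, ← Real.rpow_mul_natCast hA]
        norm_num

theorem GN4.integrable_pow_four {C4 : ℝ} (hGN4 : GN4 C4) {u : R3 → ℝ} (hu : H1 u) :
    Integrable (fun x => u x ^ 4) := by
  let w : ℕ → R3 → ℝ := fun n x => arctanTrunc (n + 1) (u x)
  have hc : ∀ n : ℕ, (0:ℝ) < n + 1 := fun n => n.cast_add_one_pos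
  have hφ := fun n => differentiable_arctanTrunc (hc n).ne'
  have hφ' := fun n => abs_deriv_arctanTrunc_le_one (hc n).ne'
  have hφ0 : ∀ n : ℕ, arctanTrunc (n + 1) 0 = 0 := fun n => by simp [arctanTrunc]
  have hw : ∀ n, H1 (w n) := fun n => H1.comp (hφ n) (hφ' n) (hφ0 n) hu
  refine integrable_of_tendsto_of_integral_norm_le (G := fun n x => |w n x| ^ 4)
    (K := C4 ^ 4 * (∫ x, ‖gradient u x‖ ^ 2) ^ ((3:ℝ)/2) * (∫ x, u x ^ 2) ^ ((1:ℝ)/2))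
    (fun n => integrable_abs_pow_four_of_abs_le (hw n).2.1 fun x => abs_arctanTrunc_le (hc n) _)
    (ae_of_all _ fun x => ?_) (fun n => ?_)
  · have hlim := (((tendsto_arctanTrunc (u x)).comp
      (tendsto_atTop_add_const_right _ 1 tendsto_natCast_atTop_atTop)).abs.pow 4)
    simpa only [Function.comp_def, pow_abs, abs_of_nonneg (Even.pow_nonneg ⟨2, rfl⟩ (u x))]
      using hlim
  · simp only [norm_pow, Real.norm_eq_abs, abs_abs]
    refine (hGN4.integral_abs_pow_four_le (hw n)).trans ?_
    gcongr C4 ^ 4 * ?_ ^ _ * ?_ ^ _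
    · exact integral_norm_gradient_comp_sq_le (hφ n) (hφ' n) hu
    · exact integral_sq_comp_le (hφ n) (hφ' n) (hφ0 n) hu.2.1

theorem GN4.integral_sq_mul_le {C4 : ℝ} (hGN4 : GN4 C4) {u v : R3 → ℝ} (hu : H1 u)
    (hv : H1 v) :
    ∫ x, u x ^ 2 * v x ≤
      C4 ^ 2 * (∫ x, u x ^ 2) ^ ((1:ℝ)/4) * (∫ x, v x ^ 2) ^ ((1:ℝ)/2) *
        (∫ x, ‖gradient u x‖ ^ 2) ^ ((3:ℝ)/4) := by
  have hT : 0 ≤ ∫ x, ‖gradient u x‖ ^ 2 := integral_nonneg fun _ => sq_nonneg _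
  have hA : 0 ≤ ∫ x, u x ^ 2 := integral_nonneg fun _ => sq_nonneg _
  have hB : 0 ≤ ∫ x, v x ^ 2 := integral_nonneg fun _ => sq_nonneg _
  have h4 : ∫ x, u x ^ 4 ≤
      C4 ^ 4 * (∫ x, ‖gradient u x‖ ^ 2) ^ ((3:ℝ)/2) * (∫ x, u x ^ 2) ^ ((1:ℝ)/2) := by
    simpa only [pow_abs, abs_of_nonneg (Even.pow_nonneg ⟨2, rfl⟩ (u _))]
      using hGN4.integral_abs_pow_four_le hu
  have hsqrt : (∫ x, u x ^ 4) ^ ((1:ℝ)/2) ≤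
      C4 ^ 2 * (∫ x, ‖gradient u x‖ ^ 2) ^ ((3:ℝ)/4) * (∫ x, u x ^ 2) ^ ((1:ℝ)/4) := by
    refine (Real.rpow_le_rpow (integral_nonneg fun _ => by positivity) h4
      (by norm_num)).trans_eq ?_
    have hC : (C4 ^ 4) ^ ((1:ℝ)/2) = C4 ^ 2 := by
      rw [show C4 ^ 4 = (C4 ^ 2) ^ 2 by ring, one_div]
      exact_mod_cast Real.pow_rpow_inv_natCast (sq_nonneg C4) two_ne_zero
    rw [Real.mul_rpow (by positivity) (by positivity),
      Real.mul_rpow (by positivity) (by positivity), ← Real.rpow_mul hT, ← Real.rpow_mul hA, hC]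
    norm_num
  calc ∫ x, u x ^ 2 * v x
      ≤ (∫ x, u x ^ 4) ^ ((1:ℝ)/2) * (∫ x, v x ^ 2) ^ ((1:ℝ)/2) :=
        integral_sq_mul_le_L4_sq_mul_L2 hu.1.continuous.aestronglyMeasurable
          (hGN4.integrable_pow_four hu) hv.2.1
    _ ≤ _ := mul_le_mul_of_nonneg_right hsqrt (Real.rpow_nonneg hB _)
    _ = _ := by ring

theorem J_eq_of_P_eq_zero {β : ℝ} {u v : R3 → ℝ} (hP : P β u v = 0) :
    J β u v = (1/6) * (∫ x, (‖gradient u x‖^2 + ‖gradient v x‖^2))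
      - (1/12) * (∫ x, (v x)^3) - (β/4) * (∫ x, (u x)^2 * v x) := by
  unfold J
  unfold P at hP
  linarith

theorem J_ge_of_P_eq_zero {β C3 C4 : ℝ} (hβ : 0 ≤ β) (hGN3 : GN3 C3) (hGN4 : GN4 C4)
    {u v : R3 → ℝ} (hu : H1 u) (hv : H1 v) (hP : P β u v = 0) :
    (1/6) * (∫ x, (‖gradient u x‖^2 + ‖gradient v x‖^2))
      - (1/12) * C3^3 * (∫ x, (v x)^2) ^ ((3:ℝ)/4) * (∫ x, ‖gradient v x‖^2) ^ ((3:ℝ)/4)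
      - (β/4) * C4^2 * (∫ x, (u x)^2) ^ ((1:ℝ)/4) * (∫ x, (v x)^2) ^ ((1:ℝ)/2) *
          (∫ x, ‖gradient u x‖^2) ^ ((3:ℝ)/4) ≤ J β u v := by
  have hcubic := hGN3.integral_pow_three_le hv
  have hcross := mul_le_mul_of_nonneg_left (hGN4.integral_sq_mul_le hu hv)
    (div_nonneg hβ zero_le_four)
  rw [J_eq_of_P_eq_zero hP]
  linarith

theorem coercive_on_pohozaev_general (β a b C3 C4 : ℝ) (hβ : 0 < β) (hGN3 : GN3 C3) (hGN4 : GN4 C4) :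
    (∀ u v : R3 → ℝ, H1 u → H1 v →
      (∫ x, (u x)^2) = a → (∫ x, (v x)^2) = b → P β u v = 0 →
      J β u v = (1/6) * (∫ x, (‖gradient u x‖^2 + ‖gradient v x‖^2))
          - (1/12) * (∫ x, (v x)^3) - (β/4) * (∫ x, (u x)^2 * v x)
      ∧ J β u v ≥ (1/6) * (∫ x, (‖gradient u x‖^2 + ‖gradient v x‖^2))
          - (1/12) * C3^3 * b ^ ((3:ℝ)/4) * (∫ x, ‖gradient v x‖^2) ^ ((3:ℝ)/4)
          - (β/4) * C4^2 * a ^ ((1:ℝ)/4) * b ^ ((1:ℝ)/2) *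
              (∫ x, ‖gradient u x‖^2) ^ ((3:ℝ)/4))
    ∧ ∃ M : ℝ, ∀ u v : R3 → ℝ, H1 u → H1 v →
        (∫ x, (u x)^2) = a → (∫ x, (v x)^2) = b → P β u v = 0 → M ≤ J β u v := by
  refine ⟨fun u v hu hv hua hvb hP => ?_, ?_⟩
  · subst hua hvb
    exact ⟨J_eq_of_P_eq_zero hP, J_ge_of_P_eq_zero hβ.le hGN3 hGN4 hu hv hP⟩
  obtain ⟨K₁, hK₁⟩ := exists_mul_rpow_le_mul_add (p := 3/4) (by norm_num) (by norm_num)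
    ((1/12) * C3^3 * b ^ ((3:ℝ)/4)) (ε := 1/6) (by norm_num)
  obtain ⟨K₂, hK₂⟩ := exists_mul_rpow_le_mul_add (p := 3/4) (by norm_num) (by norm_num)
    ((β/4) * C4^2 * a ^ ((1:ℝ)/4) * b ^ ((1:ℝ)/2)) (ε := 1/6) (by norm_num)
  refine ⟨-(K₁ + K₂), fun u v hu hv hua hvb hP => ?_⟩
  have hJ := J_ge_of_P_eq_zero hβ.le hGN3 hGN4 hu hv hP
  have hTu : 0 ≤ ∫ x, ‖gradient u x‖ ^ 2 := integral_nonneg fun _ => sq_nonneg _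
  have hTv : 0 ≤ ∫ x, ‖gradient v x‖ ^ 2 := integral_nonneg fun _ => sq_nonneg _
  rw [hua, hvb, integral_add hu.2.2.integrable_sq hv.2.2.integrable_sq] at hJ
  linarith [hK₁ _ hTv, hK₂ _ hTu]

/-- **Coercivity on the Nehari–Pohozaev set.** On `{(u,v) ∈ S(a,b) : P(u,v) = 0}` the energy
reduces to `J = (1/6)∫(|∇u|²+|∇v|²) - (1/12)∫v³ - (β/4)∫u²v`, is bounded below by the explicit
Gagliardo–Nirenberg expression, and in particular `J` is bounded from below on this set. -/
theorem coercive_on_pohozaev (β a b C3 C4 : ℝ) (hβ : 0 < β) (ha : 0 ≤ a) (hb : 0 < b)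
    (hC3 : 0 < C3) (hC4 : 0 < C4) (hGN3 : GN3 C3) (hGN4 : GN4 C4) :
    (∀ u v : R3 → ℝ, H1 u → H1 v →
      (∫ x, (u x)^2) = a → (∫ x, (v x)^2) = b → P β u v = 0 →
      J β u v = (1/6) * (∫ x, (‖gradient u x‖^2 + ‖gradient v x‖^2))
          - (1/12) * (∫ x, (v x)^3) - (β/4) * (∫ x, (u x)^2 * v x)
      ∧ J β u v ≥ (1/6) * (∫ x, (‖gradient u x‖^2 + ‖gradient v x‖^2))
          - (1/12) * C3^3 * b ^ ((3:ℝ)/4) * (∫ x, ‖gradient v x‖^2) ^ ((3:ℝ)/4)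
          - (β/4) * C4^2 * a ^ ((1:ℝ)/4) * b ^ ((1:ℝ)/2) *
              (∫ x, ‖gradient u x‖^2) ^ ((3:ℝ)/4))
    ∧ ∃ M : ℝ, ∀ u v : R3 → ℝ, H1 u → H1 v →
        (∫ x, (u x)^2) = a → (∫ x, (v x)^2) = b → P β u v = 0 → M ≤ J β u v :=
  coercive_on_pohozaev_general β a b C3 C4 hβ hGN3 hGN4
end
end

section
/- Let u₁, u₂, v₁, v₂ ≥ 0 be Borel measurable functions on ℝᴺ vanishing at infinity. Then ∫_{ℝᴺ}(u₁u₂ + v₁v₂) dx ≤ ∫_{ℝᴺ} {u₁,v₁}* {u₂,v₂}* dx. -/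
/-!
Both sides are layer-cake integrals over pairs of levels `(s, t) ∈ (0, ∞)²`. By Tonelli, the
left side becomes `∫∫ |{s < |u₁|, t < |u₂|}| + |{s < |v₁|, t < |v₂|}| ds dt` and the right side
`∫∫ |A*(u₁,v₁;s) ∩ A*(u₂,v₂;t)| ds dt`. The intersection of the two centred balls has measure
`min (|{|u₁| > s}| + |{|v₁| > s}|) (|{|u₂| > t}| + |{|v₂| > t}|)`, and each set on the left is
contained in the corresponding superlevel sets, so the integrands compare level by level.
-/

open MeasureTheory
open scoped ENNReal

noncomputable section

/-- A Borel function `u` vanishes at infinity if all its superlevel sets at positive levels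
have finite measure. -/
def VanishAtInfinity {N : ℕ} (u : EuclideanSpace ℝ (Fin N) → ℝ) : Prop :=
  ∀ t : ℝ, 0 < t → volume {x | t < |u x|} < ⊤

/-- `A*(u,v;t)`: the open ball centered at the origin whose measure equals
`|{|u| > t}| + |{|v| > t}|`. -/
def jointSet {N : ℕ} (u v : EuclideanSpace ℝ (Fin N) → ℝ) (t : ℝ) :
    Set (EuclideanSpace ℝ (Fin N)) :=
  {x | volume (Metric.ball (0 : EuclideanSpace ℝ (Fin N)) ‖x‖) <
        volume {y | t < |u y|} + volume {y | t < |v y|}}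

/-- The joint symmetric decreasing rearrangement
`{u,v}*(x) = ∫₀^∞ χ_{A*(u,v;t)}(x) dt` (with values in `[0,∞]`). -/
def jointRearr {N : ℕ} (u v : EuclideanSpace ℝ (Fin N) → ℝ)
    (x : EuclideanSpace ℝ (Fin N)) : ℝ≥0∞ :=
  ∫⁻ t in Set.Ioi (0:ℝ), (jointSet u v t).indicator (fun _ => (1:ℝ≥0∞)) x

open Set Metric

theorem measurable_measure_ball_norm {E : Type*} [NormedAddCommGroup E] [MeasurableSpace E]
    [OpensMeasurableSpace E] (μ : Measure E) : Measurable fun x : E => μ (ball 0 ‖x‖) :=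
  (Monotone.measurable fun _ _ hrs => measure_mono (ball_subset_ball hrs)).comp measurable_norm

theorem measure_setOf_measure_ball_norm_lt {E : Type*} [NormedAddCommGroup E] [NormedSpace ℝ E]
    [FiniteDimensional ℝ E] [Nontrivial E] [MeasurableSpace E] [BorelSpace E] (μ : Measure E)
    [μ.IsAddHaarMeasure] (c : ℝ≥0∞) :
    μ {x | μ (ball 0 ‖x‖) < c} = c := by
  rcases eq_or_ne c ⊤ with rfl | hc
  · -- balls have finite measure, the whole space has infinite measure
    simp [measure_ball_lt_top]
  set d := Module.finrank ℝ E
  set B := μ (ball (0 : E) 1)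
  have hB0 : B ≠ 0 := (measure_ball_pos μ 0 one_pos).ne'
  have hBt : B ≠ ⊤ := measure_ball_lt_top.ne
  have hcB : c / B ≠ ⊤ := ENNReal.div_ne_top hc hB0
  have hd : d ≠ 0 := Module.finrank_pos.ne'
  set r := (c / B).toReal ^ (d⁻¹ : ℝ)
  have hr : 0 ≤ r := by positivity
  have hrd : r ^ d = (c / B).toReal := Real.rpow_inv_natCast_pow ENNReal.toReal_nonneg hd
  have hset : {x : E | μ (ball 0 ‖x‖) < c} = ball 0 r := by
    ext x
    rw [mem_ofPred_eq, mem_ball_zero_iff, μ.addHaar_ball 0 (norm_nonneg x),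
      ← ENNReal.lt_div_iff_mul_lt (.inl hB0) (.inl hBt),
      ENNReal.ofReal_lt_iff_lt_toReal (by positivity) hcB, ← hrd]
    exact pow_lt_pow_iff_left₀ (norm_nonneg x) hr hd
  rw [hset, μ.addHaar_ball 0 hr, hrd, ENNReal.ofReal_toReal hcB, ENNReal.div_mul_cancel hB0 hBt]

theorem measure_inter_add_measure_inter_le_min {α : Type*} [MeasurableSpace α] (μ : Measure α)
    (A₁ A₂ B₁ B₂ : Set α) :
    μ (A₁ ∩ A₂) + μ (B₁ ∩ B₂) ≤ min (μ A₁ + μ B₁) (μ A₂ + μ B₂) :=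
  le_min (add_le_add (measure_mono inter_subset_left) (measure_mono inter_subset_left))
    (add_le_add (measure_mono inter_subset_right) (measure_mono inter_subset_right))

theorem lintegral_measure_slice_comm {α β : Type*} [MeasurableSpace α] [MeasurableSpace β]
    (μ : Measure α) (ν : Measure β) [SFinite μ] [SFinite ν] (P : α → β → Prop)
    (hP : MeasurableSet {z : α × β | P z.1 z.2}) :
    ∫⁻ x, ν {y | P x y} ∂μ = ∫⁻ y, μ {x | P x y} ∂ν :=
  (Measure.prod_apply hP).symm.trans (Measure.prod_apply_symm hP)

theorem lintegral_measure_slice_add_comm {α β : Type*} [MeasurableSpace α] [MeasurableSpace β]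
    (μ : Measure α) (ν : Measure β) [SFinite μ] [SFinite ν] (P Q : α → β → Prop)
    (hP : MeasurableSet {z : α × β | P z.1 z.2}) (hQ : MeasurableSet {z : α × β | Q z.1 z.2}) :
    ∫⁻ x, ν {y | P x y} + ν {y | Q x y} ∂μ = ∫⁻ y, μ {x | P x y} + μ {x | Q x y} ∂ν := by
  have hPx : Measurable fun x => ν {y | P x y} := measurable_measure_prodMk_left hP
  have hPy : Measurable fun y => μ {x | P x y} := measurable_measure_prodMk_right hP
  rw [lintegral_add_left hPx, lintegral_add_left hPy,
    lintegral_measure_slice_comm μ ν P hP, lintegral_measure_slice_comm μ ν Q hQ]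

theorem volume_Ioi_prod_Iio_Iio (a b : ℝ) :
    ((volume.restrict (Ioi (0 : ℝ))).prod (volume.restrict (Ioi 0))) (Iio a ×ˢ Iio b) =
      ENNReal.ofReal a * ENNReal.ofReal b := by
  rw [Measure.prod_prod, Measure.restrict_apply measurableSet_Iio,
    Measure.restrict_apply measurableSet_Iio, Iio_inter_Ioi, Iio_inter_Ioi,
    Real.volume_Ioo, Real.volume_Ioo, sub_zero, sub_zero]

theorem measurableSet_lt_abs_and_lt_abs {α : Type*} [MeasurableSpace α] {f g : α → ℝ}
    (hf : Measurable f) (hg : Measurable g) :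
    MeasurableSet {z : α × (ℝ × ℝ) | z.2.1 < |f z.1| ∧ z.2.2 < |g z.1|} :=
  (measurableSet_lt measurable_snd.fst (hf.abs.comp measurable_fst)).inter
    (measurableSet_lt measurable_snd.snd (hg.abs.comp measurable_fst))

theorem ofReal_mul_add_mul_le (a b c d : ℝ) :
    ENNReal.ofReal (a * b + c * d) ≤
      ENNReal.ofReal |a| * ENNReal.ofReal |b| + ENNReal.ofReal |c| * ENNReal.ofReal |d| := by
  rw [← ENNReal.ofReal_mul (abs_nonneg a), ← ENNReal.ofReal_mul (abs_nonneg c),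
    ← ENNReal.ofReal_add (by positivity) (by positivity), ← abs_mul, ← abs_mul]
  exact ENNReal.ofReal_le_ofReal (add_le_add (le_abs_self _) (le_abs_self _))

section JointRearrangement

variable {N : ℕ}

local notation "ℝ^" N => EuclideanSpace ℝ (Fin N)

def jointDistribution (u v : (ℝ^N) → ℝ) (t : ℝ) : ℝ≥0∞ :=
  volume {y | t < |u y|} + volume {y | t < |v y|}

theorem antitone_jointDistribution (u v : (ℝ^N) → ℝ) : Antitone (jointDistribution u v) :=
  fun _ _ hst => add_le_add (measure_mono fun _ hy => hst.trans_lt hy)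
    (measure_mono fun _ hy => hst.trans_lt hy)

theorem measurableSet_mem_jointSet (u v : (ℝ^N) → ℝ) :
    MeasurableSet {z : (ℝ^N) × ℝ | z.1 ∈ jointSet u v z.2} :=
  measurableSet_lt ((measurable_measure_ball_norm volume).comp measurable_fst)
    ((antitone_jointDistribution u v).measurable.comp measurable_snd)

theorem measurableSet_mem_jointSet_and_mem_jointSet (u₁ v₁ u₂ v₂ : (ℝ^N) → ℝ) :
    MeasurableSet {z : (ℝ^N) × (ℝ × ℝ) | z.1 ∈ jointSet u₁ v₁ z.2.1 ∧ z.1 ∈ jointSet u₂ v₂ z.2.2} :=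
  ((measurableSet_mem_jointSet u₁ v₁).preimage (measurable_fst.prodMk measurable_snd.fst)).inter
    ((measurableSet_mem_jointSet u₂ v₂).preimage (measurable_fst.prodMk measurable_snd.snd))

theorem jointRearr_eq_measure (u v : (ℝ^N) → ℝ) (x : ℝ^N) :
    jointRearr u v x = volume.restrict (Ioi 0) {t | x ∈ jointSet u v t} :=
  lintegral_indicator_one ((measurableSet_mem_jointSet u v).preimage measurable_prodMk_left)

theorem volume_jointSet_inter (hN : 1 ≤ N) (u₁ v₁ u₂ v₂ : (ℝ^N) → ℝ) (s t : ℝ) :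
    volume (jointSet u₁ v₁ s ∩ jointSet u₂ v₂ t) =
      min (jointDistribution u₁ v₁ s) (jointDistribution u₂ v₂ t) := by
  have : Nonempty (Fin N) := ⟨⟨0, hN⟩⟩
  simp only [jointSet, ← ofPred_and, ← lt_min_iff]
  exact measure_setOf_measure_ball_norm_lt volume _

end JointRearrangement

theorem jointRearr_riesz_general (N : ℕ) (hN : 1 ≤ N)
    (u1 u2 v1 v2 : EuclideanSpace ℝ (Fin N) → ℝ)
    (hu1 : Measurable u1) (hu2 : Measurable u2) (hv1 : Measurable v1) (hv2 : Measurable v2) :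
    ∫⁻ x, ENNReal.ofReal (u1 x * u2 x + v1 x * v2 x) ≤
      ∫⁻ x, jointRearr u1 v1 x * jointRearr u2 v2 x := by
  set ν := volume.restrict (Ioi (0 : ℝ))
  calc ∫⁻ x, ENNReal.ofReal (u1 x * u2 x + v1 x * v2 x)
      ≤ ∫⁻ x, (ν.prod ν) (Iio |u1 x| ×ˢ Iio |u2 x|) + (ν.prod ν) (Iio |v1 x| ×ˢ Iio |v2 x|) := by
        simp only [ν, volume_Ioi_prod_Iio_Iio]
        exact lintegral_mono fun x => ofReal_mul_add_mul_le _ _ _ _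
    _ = ∫⁻ p : ℝ × ℝ, volume {x | p.1 < |u1 x| ∧ p.2 < |u2 x|} +
          volume {x | p.1 < |v1 x| ∧ p.2 < |v2 x|} ∂(ν.prod ν) :=
        lintegral_measure_slice_add_comm volume (ν.prod ν) (fun x p => p.1 < |u1 x| ∧ p.2 < |u2 x|)
          (fun x p => p.1 < |v1 x| ∧ p.2 < |v2 x|) (measurableSet_lt_abs_and_lt_abs hu1 hu2)
          (measurableSet_lt_abs_and_lt_abs hv1 hv2)
    _ ≤ ∫⁻ p : ℝ × ℝ, volume (jointSet u1 v1 p.1 ∩ jointSet u2 v2 p.2) ∂(ν.prod ν) := by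
        refine lintegral_mono fun p => ?_
        rw [volume_jointSet_inter hN]
        exact measure_inter_add_measure_inter_le_min _ _ _ _ _
    _ = ∫⁻ x, (ν.prod ν) ({s | x ∈ jointSet u1 v1 s} ×ˢ {t | x ∈ jointSet u2 v2 t}) :=
        (lintegral_measure_slice_comm _ _ _
          (measurableSet_mem_jointSet_and_mem_jointSet u1 v1 u2 v2)).symm
    _ = ∫⁻ x, jointRearr u1 v1 x * jointRearr u2 v2 x := by
        simp only [Measure.prod_prod, jointRearr_eq_measure, ν]

/-- **Riesz-type inequality for the joint rearrangement:** for nonnegative Borel functions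
vanishing at infinity, `∫ (u₁u₂ + v₁v₂) ≤ ∫ {u₁,v₁}* {u₂,v₂}*`. -/
theorem jointRearr_riesz (N : ℕ) (hN : 1 ≤ N)
    (u1 u2 v1 v2 : EuclideanSpace ℝ (Fin N) → ℝ)
    (hu1 : Measurable u1) (hu2 : Measurable u2) (hv1 : Measurable v1) (hv2 : Measurable v2)
    (hu1p : ∀ x, 0 ≤ u1 x) (hu2p : ∀ x, 0 ≤ u2 x)
    (hv1p : ∀ x, 0 ≤ v1 x) (hv2p : ∀ x, 0 ≤ v2 x)
    (h1 : VanishAtInfinity u1) (h2 : VanishAtInfinity u2)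
    (h3 : VanishAtInfinity v1) (h4 : VanishAtInfinity v2) :
    ∫⁻ x, ENNReal.ofReal (u1 x * u2 x + v1 x * v2 x) ≤
      ∫⁻ x, jointRearr u1 v1 x * jointRearr u2 v2 x :=
  jointRearr_riesz_general N hN u1 u2 v1 v2 hu1 hu2 hv1 hv2
end
end

section
/- Let (uₙ, vₙ) be a bounded sequence in H¹(ℝ³)×H¹(ℝ³) with ∫(|∇uₙ|²+|∇vₙ|²) bounded, J(uₙ,vₙ) → m < 0, and ‖uₙ‖²₂ → a, ‖vₙ‖²₂ → b. Then there exist α > 0 and yₙ ∈ ℝ³ with limsup_{n→∞} ∫_{B₂(yₙ)}(uₙ² + vₙ²) dx ≥ α > 0 (nonvanishing). -/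
open MeasureTheory Filter Set
open scoped ENNReal Topology

noncomputable section

/-!
If no ball of radius `2` kept a uniformly positive share of the mass, the local masses
`sup_c ∫_{B₂(c)} (uₙ² + vₙ²)` would tend to `0`. Lions' lemma then forces `‖uₙ‖₄, ‖vₙ‖₄ → 0`:
cover `ℝ³` by the unit balls centred at `ℤ³`, bound `∫_B u⁴ ≤ ‖u‖_{L²(B)} ‖u‖_{L⁶(B)}³`,
control `‖u‖_{L⁶(B)}` by the `H¹` norm on the doubled ball through a cut-off and the Sobolev
inequality, and sum using that every point lies in at most `5³` of the doubled balls.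
Interpolating with the bounded `L²` norms gives `‖uₙ‖₃, ‖vₙ‖₃ → 0`, so every nonlinear term of `J`
vanishes in the limit and `m = lim J(uₙ, vₙ) ≥ 0`.

`H1` only asks for differentiability, whereas Mathlib's Gagliardo–Nirenberg–Sobolev inequality
is stated for `C¹` functions, so its proof is rerun for differentiable ones; the `L⁶` bound in
`ℝ³` is its `L^{3/2}` case applied to `g⁴`.
-/

open Metric Function

theorem ENNReal.lintegral_mul_le_sqrt_mul_sqrt {α : Type*} [MeasurableSpace α] {μ : Measure α}
    {f g : α → ℝ≥0∞} (hf : AEMeasurable f μ) (hg : AEMeasurable g μ) :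
    ∫⁻ a, f a * g a ∂μ ≤ (∫⁻ a, f a ^ 2 ∂μ) ^ (1 / 2 : ℝ) * (∫⁻ a, g a ^ 2 ∂μ) ^ (1 / 2 : ℝ) := by
  simpa only [ENNReal.rpow_ofNat, Pi.mul_apply] using
    ENNReal.lintegral_mul_le_Lp_mul_Lq μ Real.HolderConjugate.two_two hf hg

theorem lintegral_pow_three_le_sqrt_mul_sqrt {α : Type*} [MeasurableSpace α] {μ : Measure α}
    {f : α → ℝ≥0∞} (hf : AEMeasurable f μ) :
    ∫⁻ x, f x ^ 3 ∂μ ≤ (∫⁻ x, f x ^ 2 ∂μ) ^ (1 / 2 : ℝ) * (∫⁻ x, f x ^ 4 ∂μ) ^ (1 / 2 : ℝ) := by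
  have h := ENNReal.lintegral_mul_le_sqrt_mul_sqrt hf (hf.pow_const 2)
  simp only [← pow_mul, ← pow_succ'] at h
  exact h

theorem ENNReal.le_rpow_of_le_mul_rpow {x a : ℝ≥0∞} {θ : ℝ} (hθ₀ : 0 ≤ θ) (hθ₁ : θ < 1)
    (hx : x ≠ ⊤) (h : x ≤ a * x ^ θ) : x ≤ a ^ (1 - θ)⁻¹ := by
  rcases eq_or_ne x 0 with rfl | hx₀
  · exact zero_le
  have hpow : x ^ (1 - θ) ≤ a := by
    have hθ : x ^ θ ≠ 0 := by simp [ENNReal.rpow_eq_zero_iff, hx₀, hx]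
    rw [← ENNReal.mul_le_mul_iff_left hθ (ENNReal.rpow_ne_top_of_nonneg hθ₀ hx),
      ← ENNReal.rpow_add _ _ hx₀ hx, sub_add_cancel, ENNReal.rpow_one]
    exact h
  calc x = (x ^ (1 - θ)) ^ (1 - θ)⁻¹ := by
        rw [← ENNReal.rpow_mul, mul_inv_cancel₀ (by linarith), ENNReal.rpow_one]
    _ ≤ a ^ (1 - θ)⁻¹ := by gcongr

theorem ENNReal.tsum_rpow_le_rpow_tsum {ι : Type*} (a : ι → ℝ≥0∞) {p : ℝ} (hp : 1 ≤ p) :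
    ∑' i, a i ^ p ≤ (∑' i, a i) ^ p := by
  have hsplit : ∀ x : ℝ≥0∞, x ^ p = x * x ^ (p - 1) := fun x => by
    have h := ENNReal.rpow_add_of_nonneg (x := x) 1 (p - 1) zero_le_one (by linarith)
    rwa [ENNReal.rpow_one, add_sub_cancel] at h
  calc ∑' i, a i ^ p = ∑' i, a i * a i ^ (p - 1) := by simp_rw [← hsplit]
    _ ≤ ∑' i, a i * (∑' j, a j) ^ (p - 1) := by
        gcongr with i
        exact ENNReal.le_tsum i
    _ = (∑' i, a i) ^ p := by rw [ENNReal.tsum_mul_right, ← hsplit]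

theorem ENNReal.sq_mul_le_pow_three_add_pow_three (a b : ℝ≥0∞) : a ^ 2 * b ≤ a ^ 3 + b ^ 3 := by
  rcases le_total a b with h | h
  · calc a ^ 2 * b ≤ b ^ 2 * b := by gcongr
      _ = b ^ 3 := by ring
      _ ≤ a ^ 3 + b ^ 3 := le_add_self
  · calc a ^ 2 * b ≤ a ^ 2 * a := by gcongr
      _ = a ^ 3 := by ring
      _ ≤ a ^ 3 + b ^ 3 := le_self_add

section Sobolev

variable {F : Type*} [NormedAddCommGroup F] [NormedSpace ℝ F] [CompleteSpace F]

theorem HasCompactSupport.enorm_le_lintegral_Iic_deriv_of_differentiable {f : ℝ → F}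
    (h'f : HasCompactSupport f) (hf : Differentiable ℝ f) (x : ℝ) :
    ‖f x‖ₑ ≤ ∫⁻ y in Iic x, ‖deriv f y‖ₑ := by
  by_cases hfin : ∫⁻ y in Iic x, ‖deriv f y‖ₑ = ⊤
  · exact hfin ▸ le_top
  have hint : IntegrableOn (deriv f) (Iic x) :=
    ⟨aestronglyMeasurable_deriv f _, lt_top_iff_ne_top.2 hfin⟩
  have hlim : Tendsto f atBot (𝓝 0) :=
    h'f.is_zero_at_infty.mono_left atBot_le_cocompact
  calc ‖f x‖ₑ = ‖∫ y in Iic x, deriv f y‖ₑ := by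
        rw [integral_Iic_of_hasDerivAt_of_tendsto' (fun t _ => (hf t).hasDerivAt) hint hlim,
          sub_zero]
    _ ≤ ∫⁻ y in Iic x, ‖deriv f y‖ₑ := enorm_integral_le_lintegral_enorm _

theorem lintegral_pow_le_pow_lintegral_fderiv_aux_of_differentiable {ι : Type*} [Fintype ι]
    {p : ℝ} (hp : Real.HolderConjugate (Fintype.card ι) p) {u : (ι → ℝ) → F}
    (hu : Differentiable ℝ u) (h2u : HasCompactSupport u) :
    ∫⁻ x, ‖u x‖ₑ ^ p ≤ (∫⁻ x, ‖fderiv ℝ u x‖ₑ) ^ p := by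
  classical
  have hn : (1 : ℝ) ≤ Fintype.card ι - 1 := by
    have : (2 : ℝ) ≤ Fintype.card ι := by exact_mod_cast hp.lt
    linarith
  calc ∫⁻ x, ‖u x‖ₑ ^ p
      = ∫⁻ x, ∏ _i : ι, ‖u x‖ₑ ^ (1 / (Fintype.card ι - 1 : ℝ)) := by
        congr! 2 with x
        rw [Finset.prod_const, Finset.card_univ, ← ENNReal.rpow_natCast, ← ENNReal.rpow_mul,
          hp.conjugate_eq]
        field_simp
    _ ≤ ∫⁻ x, ∏ i,
          (∫⁻ xᵢ, ‖fderiv ℝ u (update x i xᵢ)‖ₑ) ^ (1 / (Fintype.card ι - 1 : ℝ)) := ?_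
    _ ≤ (∫⁻ x, ‖fderiv ℝ u x‖ₑ) ^ p :=
        lintegral_prod_lintegral_pow_le _ hp (by fun_prop)
  gcongr with x i
  calc ‖u x‖ₑ = ‖(u ∘ update x i) (x i)‖ₑ := by simp
    _ ≤ ∫⁻ xᵢ in Iic (x i), ‖deriv (u ∘ update x i) xᵢ‖ₑ :=
        (h2u.comp_isClosedEmbedding (isClosedEmbedding_update x i)
          ).enorm_le_lintegral_Iic_deriv_of_differentiable
          (fun y => (hu _).comp y (hasDerivAt_update x i y).differentiableAt) _
    _ ≤ ∫⁻ xᵢ, ‖fderiv ℝ u (update x i xᵢ)‖ₑ := by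
        refine lintegral_mono' Measure.restrict_le_self fun y => ?_
        rw [fderiv_comp_deriv _ (hu _) (hasDerivAt_update x i y).differentiableAt]
        refine (ContinuousLinearMap.le_opENorm _ _).trans ?_
        simp [deriv_update, Pi.enorm_single]

theorem EuclideanSpace.lintegral_pow_le_pow_lintegral_fderiv_of_differentiable {ι : Type*}
    [Fintype ι] {p : ℝ} (hp : Real.HolderConjugate (Fintype.card ι) p)
    {u : EuclideanSpace ℝ ι → F} (hu : Differentiable ℝ u) (h2u : HasCompactSupport u) :
    ∫⁻ x, ‖u x‖ₑ ^ p ≤ (‖((EuclideanSpace.equiv ι ℝ).symm : (ι → ℝ) →L[ℝ] EuclideanSpace ℝ ι)‖ₑ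
      * ∫⁻ x, ‖fderiv ℝ u x‖ₑ) ^ p := by
  set e := (EuclideanSpace.equiv ι ℝ).symm
  have he := (PiLp.volume_preserving_toLp ι).lintegral_comp_emb
    (MeasurableEquiv.toLp 2 (ι → ℝ)).measurableEmbedding
  have hv : Differentiable ℝ (u ∘ e) := hu.comp e.differentiable
  have h2v : HasCompactSupport (u ∘ e) := h2u.comp_homeomorph e.toHomeomorph
  calc ∫⁻ x, ‖u x‖ₑ ^ p = ∫⁻ y, ‖(u ∘ e) y‖ₑ ^ p := (he _).symm
    _ ≤ (∫⁻ y, ‖fderiv ℝ (u ∘ e) y‖ₑ) ^ p :=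
        lintegral_pow_le_pow_lintegral_fderiv_aux_of_differentiable hp hv h2v
    _ ≤ (∫⁻ y, ‖(e : (ι → ℝ) →L[ℝ] EuclideanSpace ℝ ι)‖ₑ * ‖fderiv ℝ u (e y)‖ₑ) ^ p := by
        gcongr with y
        · exact hp.symm.nonneg
        rw [fderiv_comp _ (hu _) e.differentiableAt, e.fderiv, mul_comm]
        exact ContinuousLinearMap.opENorm_comp_le _ _
    _ = (‖(e : (ι → ℝ) →L[ℝ] EuclideanSpace ℝ ι)‖ₑ * ∫⁻ x, ‖fderiv ℝ u x‖ₑ) ^ p := by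
        rw [lintegral_const_mul' _ _ enorm_ne_top]
        congr 2
        exact he fun x => ‖fderiv ℝ u x‖ₑ

end Sobolev

theorem enorm_fderiv_pow_le {E : Type*} [NormedAddCommGroup E] [NormedSpace ℝ E] {g : E → ℝ}
    (hg : Differentiable ℝ g) (n : ℕ) (x : E) :
    ‖fderiv ℝ (fun y => g y ^ n) x‖ₑ ≤ n * (‖g x‖ₑ ^ (n - 1) * ‖fderiv ℝ g x‖ₑ) := by
  rw [((hg x).hasFDerivAt.pow n).fderiv, enorm_smul, nsmul_eq_mul, enorm_mul, enorm_pow,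
    Real.enorm_natCast, mul_assoc]

theorem lintegral_enorm_pow_six_le {g : R3 → ℝ} (hg : Differentiable ℝ g)
    (h2g : HasCompactSupport g) :
    ∫⁻ x, ‖g x‖ₑ ^ 6 ≤ (4 * ‖((EuclideanSpace.equiv (Fin 3) ℝ).symm :
      (Fin 3 → ℝ) →L[ℝ] R3)‖ₑ) ^ 6 * (∫⁻ x, ‖fderiv ℝ g x‖ₑ ^ 2) ^ 3 := by
  set κ := ‖((EuclideanSpace.equiv (Fin 3) ℝ).symm : (Fin 3 → ℝ) →L[ℝ] R3)‖ₑ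
  set X := ∫⁻ x, ‖g x‖ₑ ^ 6
  set Y := ∫⁻ x, ‖fderiv ℝ g x‖ₑ ^ 2
  have hX : X ≠ ⊤ := by
    have h6 : HasCompactSupport fun x => g x ^ 6 :=
      h2g.comp_left (g := fun t : ℝ => t ^ 6) (by simp)
    have hi : Integrable (fun x => g x ^ 6) :=
      (hg.continuous.pow 6).integrable_of_hasCompactSupport h6
    simpa only [HasFiniteIntegral, enorm_pow] using hi.2.ne
  have hp : Real.HolderConjugate (Fintype.card (Fin 3)) (3 / 2) := by
    rw [Fintype.card_fin]; constructor <;> norm_num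
  have hCS : ∫⁻ x, ‖g x‖ₑ ^ 3 * ‖fderiv ℝ g x‖ₑ ≤ X ^ (1 / 2 : ℝ) * Y ^ (1 / 2 : ℝ) := by
    have h := ENNReal.lintegral_mul_le_sqrt_mul_sqrt (μ := volume)
      (hg.continuous.measurable.enorm.pow_const 3).aemeasurable
      (measurable_fderiv ℝ g).enorm.aemeasurable
    simp only [← pow_mul] at h
    exact h
  have hsob : X ≤ ((4 * κ) ^ (3 / 2 : ℝ) * Y ^ (3 / 4 : ℝ)) * X ^ (3 / 4 : ℝ) := by
    calc X = ∫⁻ x, ‖g x ^ 4‖ₑ ^ (3 / 2 : ℝ) := by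
          congr! 2 with x
          rw [enorm_pow, ← ENNReal.rpow_natCast (‖g x‖ₑ) 4, ← ENNReal.rpow_mul]
          norm_num
      _ ≤ (κ * ∫⁻ x, ‖fderiv ℝ (fun y => g y ^ 4) x‖ₑ) ^ (3 / 2 : ℝ) :=
          EuclideanSpace.lintegral_pow_le_pow_lintegral_fderiv_of_differentiable hp (hg.pow 4)
            (h2g.comp_left (g := fun t : ℝ => t ^ 4) (by simp))
      _ ≤ (κ * (4 * (X ^ (1 / 2 : ℝ) * Y ^ (1 / 2 : ℝ)))) ^ (3 / 2 : ℝ) := by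
          gcongr
          calc ∫⁻ x, ‖fderiv ℝ (fun y => g y ^ 4) x‖ₑ
              ≤ ∫⁻ x, 4 * (‖g x‖ₑ ^ 3 * ‖fderiv ℝ g x‖ₑ) :=
                lintegral_mono fun x => (enorm_fderiv_pow_le hg 4 x).trans_eq (by norm_num)
            _ ≤ 4 * (X ^ (1 / 2 : ℝ) * Y ^ (1 / 2 : ℝ)) := by
                rw [lintegral_const_mul' _ _ (by norm_num)]
                gcongr
      _ = ((4 * κ) ^ (3 / 2 : ℝ) * Y ^ (3 / 4 : ℝ)) * X ^ (3 / 4 : ℝ) := by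
          simp only [ENNReal.mul_rpow_of_nonneg _ _ (by norm_num : (0 : ℝ) ≤ 3 / 2),
            ← ENNReal.rpow_mul]
          norm_num
          ring
  calc X ≤ ((4 * κ) ^ (3 / 2 : ℝ) * Y ^ (3 / 4 : ℝ)) ^ (1 - 3 / 4 : ℝ)⁻¹ :=
        ENNReal.le_rpow_of_le_mul_rpow (by norm_num) (by norm_num) hX hsob
    _ = (4 * κ) ^ 6 * Y ^ 3 := by
        rw [ENNReal.mul_rpow_of_nonneg _ _ (by norm_num), ← ENNReal.rpow_mul,
          ← ENNReal.rpow_mul]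
        norm_num

section Cutoff

variable {E : Type*} [NormedAddCommGroup E] [NormedSpace ℝ E]

def h1NormSq [MeasurableSpace E] (u : E → ℝ) (μ : Measure E) : ℝ≥0∞ :=
  ∫⁻ x, (‖u x‖ₑ ^ 2 + ‖fderiv ℝ u x‖ₑ ^ 2) ∂μ

theorem enorm_fderiv_mul_sq_le {φ u : E → ℝ} {K : ℝ} (hφ : Differentiable ℝ φ)
    (hu : Differentiable ℝ u) (hφ₁ : ∀ x, |φ x| ≤ 1) (hK : ∀ x, ‖fderiv ℝ φ x‖ ≤ K) (x : E) :
    ‖fderiv ℝ (fun y => φ y * u y) x‖ₑ ^ 2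
      ≤ ENNReal.ofReal (2 * (1 + K ^ 2)) * (‖u x‖ₑ ^ 2 + ‖fderiv ℝ u x‖ₑ ^ 2) := by
  have hD : ‖fderiv ℝ (fun y => φ y * u y) x‖ ≤ ‖fderiv ℝ u x‖ + K * ‖u x‖ := by
    rw [fderiv_fun_mul (hφ x) (hu x)]
    refine (norm_add_le _ _).trans (add_le_add ?_ ?_)
    · rw [norm_smul, Real.norm_eq_abs]
      exact mul_le_of_le_one_left (norm_nonneg _) (hφ₁ x)
    · rw [norm_smul, mul_comm]
      exact mul_le_mul_of_nonneg_right (hK x) (norm_nonneg _)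
  have hK₀ : 0 ≤ K := (norm_nonneg _).trans (hK x)
  simp only [← ofReal_norm, ← ENNReal.ofReal_pow (norm_nonneg _),
    ← ENNReal.ofReal_add (sq_nonneg _) (sq_nonneg _)]
  rw [← ENNReal.ofReal_mul (by positivity)]
  refine ENNReal.ofReal_le_ofReal ?_
  nlinarith [norm_nonneg (fderiv ℝ (fun y => φ y * u y) x), norm_nonneg (fderiv ℝ u x),
    norm_nonneg (u x), sq_nonneg (‖fderiv ℝ u x‖ - K * ‖u x‖), mul_nonneg hK₀ (norm_nonneg (u x))]

end Cutoff

theorem exists_lintegral_ball_pow_six_le :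
    ∃ C : ℝ≥0∞, C ≠ ⊤ ∧ ∀ u : R3 → ℝ, Differentiable ℝ u → ∀ c : R3,
      ∫⁻ x in ball c 1, ‖u x‖ₑ ^ 6 ≤ C * h1NormSq u (volume.restrict (ball c 2)) ^ 3 := by
  let χ : ContDiffBump (0 : R3) := ⟨1, 3 / 2, one_pos, by norm_num⟩
  have hχ : Differentiable ℝ χ := (χ.contDiff (n := 1)).differentiable one_ne_zero
  obtain ⟨K, hK⟩ := ((χ.contDiff (n := 1)).continuous_fderiv one_ne_zero)
    |>.bounded_above_of_compact_support (χ.hasCompactSupport.fderiv (𝕜 := ℝ))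
  set M := ENNReal.ofReal (2 * (1 + K ^ 2))
  refine ⟨(4 * ‖((EuclideanSpace.equiv (Fin 3) ℝ).symm : (Fin 3 → ℝ) →L[ℝ] R3)‖ₑ) ^ 6 * M ^ 3,
    by finiteness, fun u hu c => ?_⟩
  set g : R3 → ℝ := fun x => χ (x - c) * u x
  have hφ : Differentiable ℝ fun x => χ (x - c) := hχ.comp (differentiable_id.sub_const c)
  have hg : Differentiable ℝ g := hφ.mul hu
  have htsupp : tsupport g ⊆ closedBall c (3 / 2) := by
    refine closure_minimal (fun x hx => ?_) isClosed_closedBall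
    have : x - c ∈ support χ := fun h => hx (by simp [g, h])
    rw [χ.support_eq, mem_ball_zero_iff] at this
    exact mem_closedBall_iff_norm.2 this.le
  have h2g : HasCompactSupport g :=
    (isCompact_closedBall c (3 / 2)).of_isClosed_subset (isClosed_tsupport g) htsupp
  have hDg : support (fun x => ‖fderiv ℝ g x‖ₑ ^ 2) ⊆ ball c 2 := by
    intro x hx
    have hx' : x ∈ support (fderiv ℝ g) := fun h => hx (by simp [h, enorm_eq_nnnorm])
    exact closedBall_subset_ball (by norm_num) (htsupp (support_fderiv_subset ℝ hx'))
  calc ∫⁻ x in ball c 1, ‖u x‖ₑ ^ 6 = ∫⁻ x in ball c 1, ‖g x‖ₑ ^ 6 := by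
        refine setLIntegral_congr_fun measurableSet_ball fun x hx => ?_
        change _ = ‖χ (x - c) * u x‖ₑ ^ 6
        rw [χ.one_of_mem_closedBall (mem_closedBall_iff_norm.2 ?_), one_mul]
        simpa using (mem_ball_iff_norm.1 hx).le
    _ ≤ ∫⁻ x, ‖g x‖ₑ ^ 6 := setLIntegral_le_lintegral _ _
    _ ≤ _ * (∫⁻ x, ‖fderiv ℝ g x‖ₑ ^ 2) ^ 3 := lintegral_enorm_pow_six_le hg h2g
    _ = _ * (∫⁻ x in ball c 2, ‖fderiv ℝ g x‖ₑ ^ 2) ^ 3 := by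
        rw [setLIntegral_eq_of_support_subset hDg]
    _ ≤ _ * (M * h1NormSq u (volume.restrict (ball c 2))) ^ 3 := by
        rw [h1NormSq, ← lintegral_const_mul' _ _ (by finiteness)]
        gcongr with x
        exact enorm_fderiv_mul_sq_le hφ hu (fun x => abs_le.2 ⟨by linarith [χ.nonneg' (x - c)],
          χ.le_one⟩) (fun x => by rw [fderiv_comp_sub]; exact hK _) x
    _ = _ := by ring

section Lattice

variable {ι : Type*} [Fintype ι]

def latticePoint (z : ι → ℤ) : EuclideanSpace ℝ ι := WithLp.toLp 2 fun i => (z i : ℝ)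

theorem iUnion_ball_latticePoint_eq_univ : ⋃ z : Fin 3 → ℤ, ball (latticePoint z) 1 = univ := by
  refine eq_univ_of_forall fun x => mem_iUnion.2 ⟨fun i => round (x i), ?_⟩
  have hcoord : ∀ i, dist (x i) (latticePoint (fun i => round (x i)) i) ^ 2 ≤ (1 / 2) ^ 2 :=
    fun i => pow_le_pow_left₀ dist_nonneg ((Real.dist_eq _ _).trans_le (abs_sub_round _)) 2
  rw [mem_ball, EuclideanSpace.dist_eq, Real.sqrt_lt' one_pos]
  calc ∑ i, dist (x i) (latticePoint (fun i => round (x i)) i) ^ 2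
      ≤ ∑ _i : Fin 3, (1 / 2 : ℝ) ^ 2 := Finset.sum_le_sum fun i _ => hcoord i
    _ < 1 ^ 2 := by norm_num

theorem mem_piFinset_of_dist_latticePoint_lt [DecidableEq ι] {x : EuclideanSpace ℝ ι} {z : ι → ℤ}
    (h : dist x (latticePoint z) < 2) :
    z ∈ Fintype.piFinset fun i => Finset.Icc (⌊x i⌋ - 2) (⌊x i⌋ + 2) := by
  rw [Fintype.mem_piFinset]
  intro i
  have hi := (PiLp.dist_apply_le x (latticePoint z) i).trans_lt h
  rw [Real.dist_eq, abs_lt] at hi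
  have hlo : ((⌊x i⌋ - 2 : ℤ) : ℝ) ≤ z i := by
    push_cast [latticePoint] at hi ⊢; linarith [Int.floor_le (x i)]
  have hhi : (z i : ℝ) < ((⌊x i⌋ + 3 : ℤ) : ℝ) := by
    push_cast [latticePoint] at hi ⊢; linarith [Int.lt_floor_add_one (x i)]
  rw [Finset.mem_Icc]
  exact ⟨by exact_mod_cast hlo, by have := (Int.cast_lt (R := ℝ)).1 hhi; omega⟩

theorem tsum_setLIntegral_ball_latticePoint_le {h : EuclideanSpace ℝ ι → ℝ≥0∞}
    (hh : Measurable h) :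
    ∑' z : ι → ℤ, ∫⁻ x in ball (latticePoint z) 2, h x ≤ 5 ^ Fintype.card ι * ∫⁻ x, h x := by
  classical
  simp_rw [← lintegral_indicator measurableSet_ball]
  rw [← lintegral_tsum fun z => (hh.indicator measurableSet_ball).aemeasurable,
    ← lintegral_const_mul' _ _ (by finiteness)]
  refine lintegral_mono fun x => ?_
  set S := Fintype.piFinset fun i => Finset.Icc (⌊x i⌋ - 2) (⌊x i⌋ + 2)
  have hS : S.card = 5 ^ Fintype.card ι := by
    have h5 : ∀ a : ℤ, (a + 2 + 1 - (a - 2)).toNat = 5 := fun a => by omega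
    simp [S, Fintype.card_piFinset, Int.card_Icc, h5]
  have hout : ∀ z ∉ S, (ball (latticePoint z) 2).indicator h x = 0 := fun z hz =>
    indicator_of_notMem (fun hx : x ∈ ball _ 2 => hz (mem_piFinset_of_dist_latticePoint_lt hx)) h
  rw [tsum_eq_sum (L := SummationFilter.unconditional _) hout]
  calc ∑ z ∈ S, (ball (latticePoint z) 2).indicator h x ≤ ∑ _z ∈ S, h x :=
        Finset.sum_le_sum fun z _ => indicator_le_self _ _ x
    _ = 5 ^ Fintype.card ι * h x := by rw [Finset.sum_const, hS, nsmul_eq_mul]; norm_cast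

end Lattice

theorem exists_lintegral_pow_four_le :
    ∃ C : ℝ≥0∞, C ≠ ⊤ ∧ ∀ u : R3 → ℝ, Differentiable ℝ u →
      ∫⁻ x, ‖u x‖ₑ ^ 4 ≤ C * (⨆ c : R3, ∫⁻ x in ball c 2, ‖u x‖ₑ ^ 2) ^ (1 / 2 : ℝ)
        * h1NormSq u volume ^ (3 / 2 : ℝ) := by
  obtain ⟨C, hC, hloc⟩ := exists_lintegral_ball_pow_six_le
  refine ⟨C ^ (1 / 2 : ℝ) * (5 ^ 3) ^ (3 / 2 : ℝ), by finiteness, fun u hu => ?_⟩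
  set T := ⨆ c : R3, ∫⁻ x in ball c 2, ‖u x‖ₑ ^ 2
  set a : (Fin 3 → ℤ) → ℝ≥0∞ := fun z => h1NormSq u (volume.restrict (ball (latticePoint z) 2))
  have hmu : Measurable fun x => ‖u x‖ₑ := hu.continuous.measurable.enorm
  have hball : ∀ z, ∫⁻ x in ball (latticePoint z) 1, ‖u x‖ₑ ^ 4
      ≤ T ^ (1 / 2 : ℝ) * (C ^ (1 / 2 : ℝ) * a z ^ (3 / 2 : ℝ)) := by
    intro z
    have hCS := ENNReal.lintegral_mul_le_sqrt_mul_sqrt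
      (μ := volume.restrict (ball (latticePoint z) 1)) hmu.aemeasurable
      (hmu.pow_const 3).aemeasurable
    simp only [← pow_mul, ← pow_succ'] at hCS
    calc ∫⁻ x in ball (latticePoint z) 1, ‖u x‖ₑ ^ 4
        ≤ (∫⁻ x in ball (latticePoint z) 1, ‖u x‖ₑ ^ 2) ^ (1 / 2 : ℝ)
          * (∫⁻ x in ball (latticePoint z) 1, ‖u x‖ₑ ^ 6) ^ (1 / 2 : ℝ) := hCS
      _ ≤ T ^ (1 / 2 : ℝ) * (C * a z ^ 3) ^ (1 / 2 : ℝ) := by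
          gcongr
          · exact (lintegral_mono_set (ball_subset_ball one_le_two)).trans
              (le_iSup (fun c => ∫⁻ x in ball c 2, ‖u x‖ₑ ^ 2) _)
          · exact hloc u hu _
      _ = T ^ (1 / 2 : ℝ) * (C ^ (1 / 2 : ℝ) * a z ^ (3 / 2 : ℝ)) := by
          rw [ENNReal.mul_rpow_of_nonneg _ _ (by norm_num), ← ENNReal.rpow_natCast,
            ← ENNReal.rpow_mul]
          norm_num
  have hdens : Measurable fun x => ‖u x‖ₑ ^ 2 + ‖fderiv ℝ u x‖ₑ ^ 2 :=
    (hmu.pow_const 2).add ((measurable_fderiv ℝ u).enorm.pow_const 2)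
  have hsum : ∑' z, a z ≤ 5 ^ 3 * h1NormSq u volume := by
    simpa [a, h1NormSq] using tsum_setLIntegral_ball_latticePoint_le hdens
  calc ∫⁻ x, ‖u x‖ₑ ^ 4 = ∫⁻ x in ⋃ z : Fin 3 → ℤ, ball (latticePoint z) 1, ‖u x‖ₑ ^ 4 := by
        rw [iUnion_ball_latticePoint_eq_univ, Measure.restrict_univ]
    _ ≤ ∑' z : Fin 3 → ℤ, ∫⁻ x in ball (latticePoint z) 1, ‖u x‖ₑ ^ 4 := lintegral_iUnion_le _ _
    _ ≤ ∑' z, T ^ (1 / 2 : ℝ) * (C ^ (1 / 2 : ℝ) * a z ^ (3 / 2 : ℝ)) :=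
        ENNReal.tsum_le_tsum hball
    _ = T ^ (1 / 2 : ℝ) * (C ^ (1 / 2 : ℝ) * ∑' z, a z ^ (3 / 2 : ℝ)) := by
        rw [ENNReal.tsum_mul_left, ENNReal.tsum_mul_left]
    _ ≤ T ^ (1 / 2 : ℝ) * (C ^ (1 / 2 : ℝ) * (5 ^ 3 * h1NormSq u volume) ^ (3 / 2 : ℝ)) := by
        gcongr
        exact (ENNReal.tsum_rpow_le_rpow_tsum a (by norm_num)).trans (by gcongr)
    _ = _ := by rw [ENNReal.mul_rpow_of_nonneg _ _ (by norm_num)]; ring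

theorem tendsto_lintegral_pow_three_of_tendsto_pow_four {α : Type*} [MeasurableSpace α]
    {μ : Measure α} {f : ℕ → α → ℝ≥0∞} (hf : ∀ n, AEMeasurable (f n) μ) {B : ℝ≥0∞}
    (hB : B ≠ ⊤) (hbdd : ∀ n, ∫⁻ x, f n x ^ 2 ∂μ ≤ B)
    (h4 : Tendsto (fun n => ∫⁻ x, f n x ^ 4 ∂μ) atTop (𝓝 0)) :
    Tendsto (fun n => ∫⁻ x, f n x ^ 3 ∂μ) atTop (𝓝 0) := by
  have hbound : Tendsto (fun n => B ^ (1 / 2 : ℝ) * (∫⁻ x, f n x ^ 4 ∂μ) ^ (1 / 2 : ℝ))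
      atTop (𝓝 0) := by
    simpa [ENNReal.zero_rpow_of_pos] using ENNReal.Tendsto.const_mul
      (((ENNReal.continuous_rpow_const (y := 1 / 2)).tendsto 0).comp h4) (Or.inr (by finiteness))
  refine tendsto_of_tendsto_of_tendsto_of_le_of_le tendsto_const_nhds hbound (fun _ => zero_le)
    fun n => (lintegral_pow_three_le_sqrt_mul_sqrt (hf n)).trans ?_
  gcongr
  exact hbdd n

theorem tendsto_lintegral_pow_three_and_four_of_vanishing {u : ℕ → R3 → ℝ}
    (hu : ∀ n, Differentiable ℝ (u n)) {B : ℝ≥0∞} (hB : B ≠ ⊤)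
    (hbdd : ∀ n, h1NormSq (u n) volume ≤ B) {T : ℕ → ℝ≥0∞} (hT : Tendsto T atTop (𝓝 0))
    (hloc : ∀ n c, ∫⁻ x in ball c 2, ‖u n x‖ₑ ^ 2 ≤ T n) :
    Tendsto (fun n => ∫⁻ x, ‖u n x‖ₑ ^ 3) atTop (𝓝 0) ∧
      Tendsto (fun n => ∫⁻ x, ‖u n x‖ₑ ^ 4) atTop (𝓝 0) := by
  obtain ⟨C, hC, hLions⟩ := exists_lintegral_pow_four_le
  have hbound : Tendsto (fun n => C * T n ^ (1 / 2 : ℝ) * B ^ (3 / 2 : ℝ)) atTop (𝓝 0) := by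
    have hT' := ((ENNReal.continuous_rpow_const (y := 1 / 2)).tendsto 0).comp hT
    simpa [ENNReal.zero_rpow_of_pos] using
      ENNReal.Tendsto.mul_const (ENNReal.Tendsto.const_mul hT' (Or.inr hC))
        (Or.inr (by finiteness))
  have h4 : Tendsto (fun n => ∫⁻ x, ‖u n x‖ₑ ^ 4) atTop (𝓝 0) := by
    refine tendsto_of_tendsto_of_tendsto_of_le_of_le tendsto_const_nhds hbound
      (fun _ => zero_le) fun n => (hLions (u n) (hu n)).trans ?_
    gcongr
    · exact iSup_le (hloc n)
    · exact hbdd n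
  refine ⟨tendsto_lintegral_pow_three_of_tendsto_pow_four
    (fun n => (hu n).continuous.measurable.enorm.aemeasurable) hB
    (fun n => (lintegral_mono fun x => le_self_add).trans (hbdd n)) h4, h4⟩

theorem ENNReal.tendsto_iSup_of_forall_tendsto_comp {X : Type*} {g : ℕ → X → ℝ≥0∞}
    (h : ∀ y : ℕ → X, Tendsto (fun n => g n (y n)) atTop (𝓝 0)) :
    Tendsto (fun n => ⨆ x, g n x) atTop (𝓝 0) := by
  rcases isEmpty_or_nonempty X with _ | ⟨⟨x₀⟩⟩
  · simp
  rw [ENNReal.tendsto_atTop_zero]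
  intro ε hε
  classical
  let y : ℕ → X := fun n => if hn : ∃ x, ε < g n x then hn.choose else x₀
  obtain ⟨N, hN⟩ := ENNReal.tendsto_atTop_zero.1 (h y) ε hε
  refine ⟨N, fun n hn => iSup_le fun x => not_lt.1 fun hx => ?_⟩
  have hex : ∃ x, ε < g n x := ⟨x, hx⟩
  have hy : ε < g n (y n) := by simpa only [y, dif_pos hex] using hex.choose_spec
  exact (hN n hn).not_gt hy

theorem tendsto_iSup_ofReal_of_forall_limsup_lt {X : Type*} {g : ℕ → X → ℝ} {C : ℝ}
    (h₀ : ∀ n x, 0 ≤ g n x) (hC : ∀ n x, g n x ≤ C)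
    (h : ∀ α > 0, ∀ y : ℕ → X, limsup (fun n => g n (y n)) atTop < α) :
    Tendsto (fun n => ⨆ x, ENNReal.ofReal (g n x)) atTop (𝓝 0) := by
  refine ENNReal.tendsto_iSup_of_forall_tendsto_comp fun y => ?_
  have hbdd : IsBoundedUnder (· ≤ ·) atTop fun n => g n (y n) :=
    isBoundedUnder_of ⟨C, fun n => hC n (y n)⟩
  have hbdd' : IsBoundedUnder (· ≥ ·) atTop fun n => g n (y n) :=
    isBoundedUnder_of ⟨0, fun n => h₀ n (y n)⟩
  have hlim : Tendsto (fun n => g n (y n)) atTop (𝓝 0) :=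
    tendsto_of_le_liminf_of_limsup_le
      (le_liminf_of_le hbdd.isCoboundedUnder_ge (Eventually.of_forall fun n => h₀ n (y n)))
      (le_of_forall_gt_imp_ge_of_dense fun α hα => (h α hα y).le) hbdd hbdd'
  simpa using ENNReal.tendsto_ofReal hlim

theorem ofReal_integral_sq_add_sq {α : Type*} [MeasurableSpace α] {μ : Measure α}
    {f g : α → ℝ} (hf : MemLp f 2 μ) (hg : MemLp g 2 μ) :
    ENNReal.ofReal (∫ x, (f x ^ 2 + g x ^ 2) ∂μ) = ∫⁻ x, (‖f x‖ₑ ^ 2 + ‖g x‖ₑ ^ 2) ∂μ := by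
  have hsq : ∀ a : ℝ, ENNReal.ofReal (a ^ 2) = ‖a‖ₑ ^ 2 := fun a => by
    rw [← sq_abs, ← Real.norm_eq_abs, ENNReal.ofReal_pow (norm_nonneg _), ofReal_norm]
  rw [ofReal_integral_eq_lintegral_ofReal (f := fun x => f x ^ 2 + g x ^ 2)
    (hf.integrable_sq.add hg.integrable_sq)
    (Eventually.of_forall fun x => by positivity)]
  congr! 2 with x
  rw [ENNReal.ofReal_add (sq_nonneg _) (sq_nonneg _), hsq, hsq]

theorem tendsto_iSup_lintegral_of_forall_limsup_lt {α ι : Type*} [MeasurableSpace α]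
    {μ : Measure α} {s : ι → Set α} {u v : ℕ → α → ℝ} (hu : ∀ n, MemLp (u n) 2 μ)
    (hv : ∀ n, MemLp (v n) 2 μ) {C : ℝ} (hC : ∀ n, ∫ x, (u n x ^ 2 + v n x ^ 2) ∂μ ≤ C)
    (h : ∀ α > 0, ∀ y : ℕ → ι,
      limsup (fun n => ∫ x in s (y n), (u n x ^ 2 + v n x ^ 2) ∂μ) atTop < α) :
    Tendsto (fun n => ⨆ i, ∫⁻ x in s i, (‖u n x‖ₑ ^ 2 + ‖v n x‖ₑ ^ 2) ∂μ) atTop (𝓝 0) := by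
  have hle : ∀ n i, ∫ x in s i, (u n x ^ 2 + v n x ^ 2) ∂μ ≤ C := fun n i =>
    (setIntegral_le_integral ((hu n).integrable_sq.add (hv n).integrable_sq)
      (Eventually.of_forall fun x => add_nonneg (sq_nonneg _) (sq_nonneg _))).trans (hC n)
  have h₀ : ∀ n i, 0 ≤ ∫ x in s i, (u n x ^ 2 + v n x ^ 2) ∂μ := fun n i =>
    integral_nonneg fun x => by positivity
  have := tendsto_iSup_ofReal_of_forall_limsup_lt h₀ hle h
  simpa only [ofReal_integral_sq_add_sq ((hu _).restrict _) ((hv _).restrict _)] using this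

theorem tendsto_integral_zero_of_tendsto_lintegral_enorm {α G : Type*} [MeasurableSpace α]
    {μ : Measure α} [NormedAddCommGroup G] [NormedSpace ℝ G] {f : ℕ → α → G}
    (h : Tendsto (fun n => ∫⁻ x, ‖f n x‖ₑ ∂μ) atTop (𝓝 0)) :
    Tendsto (fun n => ∫ x, f n x ∂μ) atTop (𝓝 0) :=
  tendsto_zero_iff_enorm_tendsto_zero.2 <| tendsto_of_tendsto_of_tendsto_of_le_of_le
    tendsto_const_nhds h (fun _ => zero_le) fun _ => enorm_integral_le_lintegral_enorm _

theorem tendsto_integral_sq_mul_of_tendsto_lintegral_pow_three {α : Type*} [MeasurableSpace α]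
    {μ : Measure α} {u v : ℕ → α → ℝ} (hu : ∀ n, Measurable (u n))
    (hu3 : Tendsto (fun n => ∫⁻ x, ‖u n x‖ₑ ^ 3 ∂μ) atTop (𝓝 0))
    (hv3 : Tendsto (fun n => ∫⁻ x, ‖v n x‖ₑ ^ 3 ∂μ) atTop (𝓝 0)) :
    Tendsto (fun n => ∫ x, u n x ^ 2 * v n x ∂μ) atTop (𝓝 0) := by
  refine tendsto_integral_zero_of_tendsto_lintegral_enorm <|
    tendsto_of_tendsto_of_tendsto_of_le_of_le tendsto_const_nhds (by simpa using hu3.add hv3)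
      (fun _ => zero_le) fun n => ?_
  calc ∫⁻ x, ‖u n x ^ 2 * v n x‖ₑ ∂μ ≤ ∫⁻ x, (‖u n x‖ₑ ^ 3 + ‖v n x‖ₑ ^ 3) ∂μ := by
        gcongr with x
        rw [enorm_mul, enorm_pow]
        exact ENNReal.sq_mul_le_pow_three_add_pow_three _ _
    _ = (∫⁻ x, ‖u n x‖ₑ ^ 3 ∂μ) + ∫⁻ x, ‖v n x‖ₑ ^ 3 ∂μ :=
        lintegral_add_left ((hu n).enorm.pow_const 3) _

theorem H1.h1NormSq_add_h1NormSq_le {u v : R3 → ℝ} (hu : H1 u) (hv : H1 v) {C : ℝ}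
    (hC : (∫ x, (u x ^ 2 + v x ^ 2)) + (∫ x, (‖gradient u x‖ ^ 2 + ‖gradient v x‖ ^ 2)) ≤ C) :
    h1NormSq u volume + h1NormSq v volume ≤ ENNReal.ofReal C := by
  have hgrad : ∀ (w : R3 → ℝ) x, ‖‖gradient w x‖‖ₑ = ‖fderiv ℝ w x‖ₑ := fun w x => by
    rw [enorm_norm, gradient, LinearIsometryEquiv.enorm_map]
  have hL2 := ofReal_integral_sq_add_sq hu.2.1 hv.2.1
  have hgradL2 := ofReal_integral_sq_add_sq hu.2.2 hv.2.2
  simp only [hgrad] at hgradL2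
  have hmu : Measurable u := hu.1.continuous.measurable
  have hmv : Measurable v := hv.1.continuous.measurable
  calc h1NormSq u volume + h1NormSq v volume
      = (∫⁻ x, (‖u x‖ₑ ^ 2 + ‖v x‖ₑ ^ 2)) + ∫⁻ x, (‖fderiv ℝ u x‖ₑ ^ 2 + ‖fderiv ℝ v x‖ₑ ^ 2) := by
        simp only [h1NormSq]
        rw [← lintegral_add_left (by fun_prop), ← lintegral_add_left (by fun_prop)]
        congr 1
        ext x
        ring
    _ = ENNReal.ofReal ((∫ x, (u x ^ 2 + v x ^ 2))
          + ∫ x, (‖gradient u x‖ ^ 2 + ‖gradient v x‖ ^ 2)) := by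
        rw [ENNReal.ofReal_add (integral_nonneg fun x => by positivity)
          (integral_nonneg fun x => by positivity), hL2, hgradL2]
    _ ≤ ENNReal.ofReal C := ENNReal.ofReal_le_ofReal hC

theorem neg_le_J (β : ℝ) (u v : R3 → ℝ) :
    -((1 / 4) * (∫ x, u x ^ 4) + (1 / 6) * (∫ x, v x ^ 3) + (β / 2) * ∫ x, u x ^ 2 * v x)
      ≤ J β u v := by
  have : 0 ≤ ∫ x, (‖gradient u x‖ ^ 2 + ‖gradient v x‖ ^ 2) :=
    integral_nonneg fun x => by positivity
  rw [J]
  linarith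

theorem nonvanishing_general (β m : ℝ) (hm : m < 0)
    (un vn : ℕ → R3 → ℝ) (hun : ∀ n, H1 (un n)) (hvn : ∀ n, H1 (vn n))
    (hbdd : ∃ C : ℝ, ∀ n,
      (∫ x, ((un n x)^2 + (vn n x)^2)) +
        (∫ x, (‖gradient (un n) x‖^2 + ‖gradient (vn n) x‖^2)) ≤ C)
    (hJ : Filter.Tendsto (fun n => J β (un n) (vn n)) Filter.atTop (𝓝 m)) :
    ∃ α > 0, ∃ y : ℕ → R3,
      α ≤ Filter.atTop.limsup
        (fun n => ∫ x in Metric.ball (y n) 2, ((un n x)^2 + (vn n x)^2)) := by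
  by_contra! hvanish
  obtain ⟨C, hC⟩ := hbdd
  have hH1 n := (hun n).h1NormSq_add_h1NormSq_le (hvn n) (hC n)
  have hT := tendsto_iSup_lintegral_of_forall_limsup_lt (s := fun c : R3 => ball c 2)
    (fun n => (hun n).2.1) (fun n => (hvn n).2.1)
    (fun n => le_of_add_le_of_nonneg_left (hC n) (integral_nonneg fun x => by positivity)) hvanish
  obtain ⟨hu3, hu4⟩ := tendsto_lintegral_pow_three_and_four_of_vanishing (fun n => (hun n).1)
    ENNReal.ofReal_ne_top (fun n => le_self_add.trans (hH1 n)) hT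
    fun n c => (lintegral_mono fun x => le_self_add).trans (le_iSup_of_le c le_rfl)
  obtain ⟨hv3, -⟩ := tendsto_lintegral_pow_three_and_four_of_vanishing (fun n => (hvn n).1)
    ENNReal.ofReal_ne_top (fun n => le_add_self.trans (hH1 n)) hT
    fun n c => (lintegral_mono fun x => le_add_self).trans (le_iSup_of_le c le_rfl)
  have hnonlin := (((tendsto_integral_zero_of_tendsto_lintegral_enorm
    (f := fun n x => un n x ^ 4) (by simpa only [enorm_pow] using hu4)).const_mul (1 / 4)).add
    ((tendsto_integral_zero_of_tendsto_lintegral_enorm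
      (f := fun n x => vn n x ^ 3) (by simpa only [enorm_pow] using hv3)).const_mul (1 / 6))).add
    ((tendsto_integral_sq_mul_of_tendsto_lintegral_pow_three
      (fun n => (hun n).1.continuous.measurable) hu3 hv3).const_mul (β / 2))
  have hm₀ : 0 ≤ m := by
    simpa using le_of_tendsto_of_tendsto hnonlin.neg hJ
      (Eventually.of_forall fun n => neg_le_J β (un n) (vn n))
  linarith

/-- **Nonvanishing of minimizing sequences.** If `(uₙ,vₙ)` is bounded in `H¹(ℝ³)²`,
`J(uₙ,vₙ) → m < 0`, `‖uₙ‖₂² → a` and `‖vₙ‖₂² → b`, then there are `α > 0` and points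
`yₙ ∈ ℝ³` with `limsup ∫_{B₂(yₙ)} (uₙ² + vₙ²) ≥ α`. -/
theorem nonvanishing (β a b m : ℝ) (hβ : 0 < β) (hm : m < 0)
    (un vn : ℕ → R3 → ℝ) (hun : ∀ n, H1 (un n)) (hvn : ∀ n, H1 (vn n))
    (hbdd : ∃ C : ℝ, ∀ n,
      (∫ x, ((un n x)^2 + (vn n x)^2)) +
        (∫ x, (‖gradient (un n) x‖^2 + ‖gradient (vn n) x‖^2)) ≤ C)
    (hJ : Filter.Tendsto (fun n => J β (un n) (vn n)) Filter.atTop (𝓝 m))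
    (hma : Filter.Tendsto (fun n => ∫ x, (un n x)^2) Filter.atTop (𝓝 a))
    (hmb : Filter.Tendsto (fun n => ∫ x, (vn n x)^2) Filter.atTop (𝓝 b)) :
    ∃ α > 0, ∃ y : ℕ → R3,
      α ≤ Filter.atTop.limsup
        (fun n => ∫ x in Metric.ball (y n) 2, ((un n x)^2 + (vn n x)^2)) :=
  nonvanishing_general β m hm un vn hun hvn hbdd hJ
end
end
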